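/- arXiv:2007.06110 — 11 statements merged into one kernel-verified Lean document; each statement's English description precedes it below -/
import Mathlib

section
/- For all a in [0,1), the quantity (1 - 1/e^{1/3})(1-a) + (1/e^{1/3})(1 - 1/e^{1/4})(1 - a^{4/3}) + (1/e^{1/3})(1/e^{1/4})(1 - 1/e^{1/2})(1 - a^{2/3}) is at least 0.637 * (1-a). -/
open Real

/- Substituting `a = x ^ 3` and dividing by `1 - x`, the inequality becomes the nonnegativity on
`[0, 1]` of a cubic whose coefficients are `e^{-1/3}`, `e^{-7/12}` and `e^{-13/12}`. The cubic is
monotone in each of them, so five-digit rational bounds on these exponentials (obtained by comparing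
powers with `e ^ m`) reduce it to a rational cubic, which has a double-root certificate near
`x = 0.752`, where its minimum sits. -/

lemma three_step_sub_eq (P Q W c x : ℝ) :
    (1 - P) * (1 - x ^ 3) + P * (1 - Q) * (1 - x ^ 4) + P * Q * (1 - W) * (1 - x ^ 2)
      - c * (1 - x ^ 3)
      = (1 - x) * ((1 - c) * (1 + x + x ^ 2) + P * x ^ 3 - P * Q * (x ^ 2 + x ^ 3)
          - P * Q * W * (1 + x)) := by
  ring

lemma pow_three_rpow_div_three {x : ℝ} (hx : 0 ≤ x) (n : ℕ) : (x ^ 3) ^ ((n : ℝ) / 3) = x ^ n := by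
  rw [← rpow_natCast x 3, ← rpow_mul hx, ← rpow_natCast]
  congr 1
  push_cast
  ring

lemma exp_pow_eq_exp_one_pow {q : ℝ} {m n : ℕ} (hq : n * q = m) : exp q ^ n = exp 1 ^ m := by
  rw [← exp_nat_mul, ← exp_nat_mul, hq, mul_one]

lemma exp_lt_of_exp_one_pow_lt {q c : ℝ} {m n : ℕ} (hn : n ≠ 0) (hq : n * q = m) (hc : 0 ≤ c)
    (h : exp 1 ^ m < c ^ n) : exp q < c := by
  rw [← pow_lt_pow_iff_left₀ (exp_pos q).le hc hn, exp_pow_eq_exp_one_pow hq]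
  exact h

lemma lt_exp_of_pow_lt_exp_one_pow {q c : ℝ} {m n : ℕ} (hn : n ≠ 0) (hq : n * q = m) (hc : 0 ≤ c)
    (h : c ^ n < exp 1 ^ m) : c < exp q := by
  rw [← pow_lt_pow_iff_left₀ hc (exp_pos q).le hn, exp_pow_eq_exp_one_pow hq]
  exact h

lemma one_div_exp_lt_of_pow_lt {q c : ℝ} {m n : ℕ} (hn : n ≠ 0) (hq : n * q = m) (hc : 0 < c)
    (h : (1 / c) ^ n < 2.7182818283 ^ m) : 1 / exp q < c := by
  rw [one_div_lt (exp_pos _) hc]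
  refine lt_exp_of_pow_lt_exp_one_pow hn hq (by positivity) (h.trans_le ?_)
  exact pow_le_pow_left₀ (by norm_num) exp_one_gt_d9.le m

lemma lt_one_div_exp_one_third : (0.71653 : ℝ) < 1 / exp (1 / 3) := by
  rw [lt_one_div (by norm_num) (exp_pos _)]
  refine exp_lt_of_exp_one_pow_lt (m := 1) (n := 3) (by norm_num) (by norm_num) (by norm_num) ?_
  rw [pow_one]
  exact exp_one_lt_d9.trans (by norm_num)

lemma one_div_exp_seven_twelfths_lt : 1 / exp (7 / 12) < (0.55804 : ℝ) :=
  one_div_exp_lt_of_pow_lt (m := 7) (n := 12) (by norm_num) (by norm_num) (by norm_num)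
    (by norm_num)

lemma one_div_exp_thirteen_twelfths_lt : 1 / exp (13 / 12) < (0.33847 : ℝ) :=
  one_div_exp_lt_of_pow_lt (m := 13) (n := 12) (by norm_num) (by norm_num) (by norm_num)
    (by norm_num)

lemma three_step_cubic_nonneg {x : ℝ} (hx0 : 0 ≤ x) (hx1 : x ≤ 1) :
    0 ≤ (1 - 0.637) * (1 + x + x ^ 2) + 0.71653 * x ^ 3 - 0.55804 * (x ^ 2 + x ^ 3)
      - 0.33847 * (1 + x) := by
  nlinarith [mul_nonneg (mul_nonneg (sub_nonneg.2 hx1) (sq_nonneg (x - 0.752))) hx0,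
    mul_nonneg (sub_nonneg.2 hx1) (sq_nonneg (x - 0.752)), mul_nonneg hx0 (sub_nonneg.2 hx1)]

lemma three_step_bracket_nonneg {P R S x : ℝ} (hx0 : 0 ≤ x) (hx1 : x ≤ 1) (hP : 0.71653 ≤ P)
    (hR : R ≤ 0.55804) (hS : S ≤ 0.33847) :
    0 ≤ (1 - 0.637) * (1 + x + x ^ 2) + P * x ^ 3 - R * (x ^ 2 + x ^ 3) - S * (1 + x) := by
  have hP' : 0.71653 * x ^ 3 ≤ P * x ^ 3 := by gcongr
  have hR' : R * (x ^ 2 + x ^ 3) ≤ 0.55804 * (x ^ 2 + x ^ 3) := by gcongr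
  have hS' : S * (1 + x) ≤ 0.33847 * (1 + x) := by gcongr
  linarith [three_step_cubic_nonneg hx0 hx1]

theorem three_step_pointwise (a : ℝ) (ha : a ∈ Set.Ico (0:ℝ) 1) :
    (1 - 1 / exp (1/3)) * (1 - a)
      + (1 / exp (1/3)) * (1 - 1 / exp (1/4)) * (1 - a ^ ((4:ℝ)/3))
      + (1 / exp (1/3)) * (1 / exp (1/4)) * (1 - 1 / exp (1/2)) * (1 - a ^ ((2:ℝ)/3))
      ≥ 0.637 * (1 - a) := by
  obtain ⟨ha0, ha1⟩ := ha
  obtain ⟨x, hx0, hx1, rfl⟩ : ∃ x, 0 ≤ x ∧ x ≤ 1 ∧ a = x ^ 3 :=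
    ⟨a ^ (1 / 3 : ℝ), rpow_nonneg ha0 _, rpow_le_one ha0 ha1.le (by norm_num),
      (rpow_inv_natCast_pow ha0 three_ne_zero).symm.trans (by norm_num)⟩
  have h4 := pow_three_rpow_div_three hx0 4
  have h2 := pow_three_rpow_div_three hx0 2
  push_cast at h4 h2
  rw [h4, h2, ge_iff_le, ← sub_nonneg, three_step_sub_eq]
  have hPQ : 1 / exp (1 / 3) * (1 / exp (1 / 4)) = 1 / exp (7 / 12) := by
    rw [div_mul_div_comm, one_mul, ← exp_add]; norm_num
  have hPQW : 1 / exp (7 / 12) * (1 / exp (1 / 2)) = 1 / exp (13 / 12) := by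
    rw [div_mul_div_comm, one_mul, ← exp_add]; norm_num
  rw [hPQ, hPQW]
  exact mul_nonneg (sub_nonneg.2 hx1) (three_step_bracket_nonneg hx0 hx1
    lt_one_div_exp_one_third.le one_div_exp_seven_twelfths_lt.le
    one_div_exp_thirteen_twelfths_lt.le)
end

section
/- Let L(y,h,h') = e^{-h} * h' * (1 - a^{1/h'})/(1-a) for fixed a in (0,1). Then a twice-differentiable function h satisfies the Euler-Lagrange equation ∂L/∂h - d/dy (∂L/∂h') = 0 if and only if -h''(y)/(h'(y))^3 = 1/ln(a) (assuming h'(y) ≠ 0, a ≠ 1). -/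
open Real

/-- The Lagrangian `L(h, h') = e^{-h} h' (1 - a^{1/h'})/(1-a)` (it does not depend on `y`
explicitly). -/
noncomputable def lagrangianL (a : ℝ) (H P : ℝ) : ℝ :=
  exp (-H) * P * (1 - a ^ (1 / P)) / (1 - a)

/-!
Write `L(h, h') = e^{-h} φ(h')` with `φ(P) = P (1 - a^{1/P}) / (1 - a)`. Since `∂L/∂h = -L`, the
Euler–Lagrange expression is `e^{-h} (h' φ'(h') - φ(h') - φ''(h') h'')`. Here
`P φ'(P) - φ(P) = ln a · a^{1/P} / (1 - a)` and `φ''(P) = -(ln a)² a^{1/P} / (P³ (1 - a))`, so the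
expression is a nonzero multiple of `1 + ln a · h'' / h'³`.
-/

lemma hasDerivAt_const_rpow_one_div {a P : ℝ} (ha : 0 < a) (hP : P ≠ 0) :
    HasDerivAt (fun Q : ℝ => a ^ (1 / Q)) (-(log a * a ^ (1 / P) / P ^ 2)) P := by
  simp only [one_div]
  convert (hasDerivAt_inv hP).const_rpow ha using 1
  field_simp

lemma eulerLagrange_exp_neg_mul {L : ℝ → ℝ → ℝ} {φ φ' : ℝ → ℝ} {φ'' : ℝ}
    (hL : ∀ H P, L H P = exp (-H) * φ P) {h : ℝ → ℝ}
    (hφ : ∀ t, HasDerivAt φ (φ' (deriv h t)) (deriv h t))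
    {y : ℝ} (hφ' : HasDerivAt φ' φ'' (deriv h y))
    (hh : DifferentiableAt ℝ h y) (hh' : DifferentiableAt ℝ (deriv h) y) :
    deriv (fun H => L H (deriv h y)) (h y)
        - deriv (fun t => deriv (fun P => L (h t) P) (deriv h t)) y
      = exp (-h y) * (deriv h y * φ' (deriv h y) - φ (deriv h y)
          - φ'' * deriv (deriv h) y) := by
  simp only [hL]
  have hH : deriv (fun H => exp (-H) * φ (deriv h y)) (h y) = -exp (-h y) * φ (deriv h y) := by
    simpa using (((hasDerivAt_id (h y)).neg.exp).mul_const (φ (deriv h y))).deriv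
  have hP : (fun t => deriv (fun P => exp (-h t) * φ P) (deriv h t))
      = fun t => exp (-h t) * φ' (deriv h t) :=
    funext fun t => ((hφ t).const_mul _).deriv
  have hy : deriv (fun t => exp (-h t) * φ' (deriv h t)) y
      = -deriv h y * exp (-h y) * φ' (deriv h y) + exp (-h y) * (φ'' * deriv (deriv h) y) := by
    have := (hh.hasDerivAt.neg.exp).mul (hφ'.comp y hh'.hasDerivAt)
    exact this.deriv.trans (by simp only [Pi.neg_apply, Function.comp_apply]; ring)
  rw [hH, hP, hy]
  ring

noncomputable section

variable (a : ℝ)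

def lagrangianProfile (P : ℝ) : ℝ := P * (1 - a ^ (1 / P)) / (1 - a)

def lagrangianProfileDeriv (P : ℝ) : ℝ :=
  (1 - a ^ (1 / P) + log a * a ^ (1 / P) / P) / (1 - a)

lemma lagrangianL_eq_exp_neg_mul (H P : ℝ) :
    lagrangianL a H P = exp (-H) * lagrangianProfile a P := by
  unfold lagrangianL lagrangianProfile
  ring

variable {a}

lemma hasDerivAt_lagrangianProfile (ha : 0 < a) {P : ℝ} (hP : P ≠ 0) :
    HasDerivAt (lagrangianProfile a) (lagrangianProfileDeriv a P) P := by
  have hA := hasDerivAt_const_rpow_one_div ha hP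
  refine (((hasDerivAt_id P).mul ((hasDerivAt_const P 1).sub hA)).div_const (1 - a)).congr_deriv ?_
  simp only [lagrangianProfileDeriv, Pi.sub_apply, id]
  field_simp
  ring

lemma hasDerivAt_lagrangianProfileDeriv (ha : 0 < a) {P : ℝ} (hP : P ≠ 0) :
    HasDerivAt (lagrangianProfileDeriv a)
      (-(log a ^ 2 * a ^ (1 / P) / (P ^ 3 * (1 - a)))) P := by
  have hA := hasDerivAt_const_rpow_one_div ha hP
  refine ((((hasDerivAt_const P 1).sub hA).add
    ((hA.const_mul (log a)).div (hasDerivAt_id P) hP)).div_const (1 - a)).congr_deriv ?_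
  simp only [id]
  field_simp
  ring

lemma mul_lagrangianProfileDeriv_sub (P : ℝ) (hP : P ≠ 0) :
    P * lagrangianProfileDeriv a P - lagrangianProfile a P = log a * a ^ (1 / P) / (1 - a) := by
  unfold lagrangianProfile lagrangianProfileDeriv
  field_simp
  ring

end

lemma exp_neg_mul_eulerLagrange_eq_zero_iff {a P P₂ : ℝ} (H : ℝ) (ha : a ∈ Set.Ioo (0 : ℝ) 1)
    (hP : P ≠ 0) :
    exp (-H) * (log a * a ^ (1 / P) / (1 - a)
        - -(log a ^ 2 * a ^ (1 / P) / (P ^ 3 * (1 - a))) * P₂) = 0 ↔ -P₂ / P ^ 3 = 1 / log a := by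
  obtain ⟨ha0, ha1⟩ := ha
  have hlog : log a < 0 := log_neg ha0 ha1
  have hc : exp (-H) * a ^ (1 / P) / (1 - a) * log a / P ^ 3 ≠ 0 := by
    have := (rpow_pos_of_pos ha0 (1 / P)).ne'
    have : 1 - a ≠ 0 := by linarith
    have := hlog.ne
    positivity
  have hfactor : exp (-H) * (log a * a ^ (1 / P) / (1 - a)
        - -(log a ^ 2 * a ^ (1 / P) / (P ^ 3 * (1 - a))) * P₂)
      = exp (-H) * a ^ (1 / P) / (1 - a) * log a / P ^ 3 * (P ^ 3 + log a * P₂) := by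
    field_simp
    ring
  rw [hfactor, mul_eq_zero, or_iff_right hc, div_eq_div_iff (pow_ne_zero 3 hP) hlog.ne]
  constructor <;> intro <;> linarith

/-- For fixed `a ∈ (0,1)`, a twice-differentiable `h` with nonvanishing derivative satisfies
the Euler–Lagrange equation `∂L/∂h - d/dy (∂L/∂h') = 0` at `y` iff
`-h''(y)/(h'(y))^3 = 1/ln a`. -/
theorem euler_lagrange_iff (a : ℝ) (ha : a ∈ Set.Ioo (0:ℝ) 1)
    (h : ℝ → ℝ) (hh : ContDiff ℝ 2 h) (hh' : ∀ y, deriv h y ≠ 0) (y : ℝ) :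
    deriv (fun H => lagrangianL a H (deriv h y)) (h y)
        - deriv (fun t => deriv (fun P => lagrangianL a (h t) P) (deriv h t)) y = 0
      ↔ -(deriv (deriv h) y) / (deriv h y) ^ 3 = 1 / Real.log a := by
  rw [eulerLagrange_exp_neg_mul (lagrangianL_eq_exp_neg_mul a)
      (fun t => hasDerivAt_lagrangianProfile ha.1 (hh' t))
      (hasDerivAt_lagrangianProfileDeriv ha.1 (hh' y))
      (hh.differentiable (by norm_num) y) (hh.differentiable_deriv_two y),
    mul_lagrangianProfileDeriv_sub _ (hh' y)]
  exact exp_neg_mul_eulerLagrange_eq_zero_iff _ ha (hh' y)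
end

section
/- There exists a unique μ̄ > 0 such that 1 - e^{√μ̄}/√μ̄ + e^{μ̄/2}/√μ̄ = 0, and μ̄ ≈ 1.9202 (i.e., μ̄ ∈ (1.92, 1.93)). -/
/-!
With `t = √μ` the equation reads `exp t - t = exp (t ^ 2 / 2)`, i.e. `g t = 0` for
`g t = log (exp t - t) - t ^ 2 / 2`. The derivative of `g` has the sign of
`gNum t = exp t - 1 - t * exp t + t ^ 2`, which vanishes at `0` and `1` and has derivative
`t * (2 - exp t)`; hence `gNum` is positive on `(0, 1)` and negative on `(1, ∞)`. So `g`, which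
vanishes at `0`, increases on `[0, 1]` and then strictly decreases: it has exactly one positive
zero, and Taylor bounds on `exp` place it between `√1.92` and `√1.93`.
-/

open Real Set

namespace MuBar

noncomputable def gNum (t : ℝ) : ℝ := exp t - 1 - t * exp t + t ^ 2

noncomputable def g (t : ℝ) : ℝ := log (exp t - t) - t ^ 2 / 2

lemma exp_sub_self_pos (t : ℝ) : 0 < exp t - t := by
  linarith [add_one_le_exp t]

lemma hasDerivAt_gNum (t : ℝ) : HasDerivAt gNum (t * (2 - exp t)) t := by
  have h := (((hasDerivAt_exp t).sub_const 1).sub ((hasDerivAt_id' t).mul (hasDerivAt_exp t))).add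
    (hasDerivAt_pow 2 t)
  exact h.congr_deriv (by push_cast; ring)

lemma continuous_gNum : Continuous gNum := by
  unfold gNum; fun_prop

lemma gNum_zero : gNum 0 = 0 := by simp [gNum]

lemma gNum_one : gNum 1 = 0 := by simp [gNum]

lemma strictMonoOn_gNum : StrictMonoOn gNum (Icc 0 (log 2)) := by
  refine strictMonoOn_of_deriv_pos (convex_Icc _ _) continuous_gNum.continuousOn fun t ht ↦ ?_
  rw [interior_Icc] at ht
  have : exp t < 2 := (lt_log_iff_exp_lt two_pos).mp ht.2
  rw [(hasDerivAt_gNum t).deriv]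
  exact mul_pos ht.1 (by linarith)

lemma strictAntiOn_gNum : StrictAntiOn gNum (Ici (log 2)) := by
  refine strictAntiOn_of_deriv_neg (convex_Ici _) continuous_gNum.continuousOn fun t ht ↦ ?_
  rw [interior_Ici] at ht
  have : 2 < exp t := (log_lt_iff_lt_exp two_pos).mp ht
  rw [(hasDerivAt_gNum t).deriv]
  exact mul_neg_of_pos_of_neg ((log_pos one_lt_two).trans ht) (by linarith)

lemma log_two_lt_one : log 2 < 1 := by
  linarith [log_two_lt_d9]

lemma gNum_pos {t : ℝ} (h0 : 0 < t) (h1 : t < 1) : 0 < gNum t := by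
  rcases le_or_gt t (log 2) with h | h
  · simpa [gNum_zero] using
      strictMonoOn_gNum ⟨le_rfl, (log_pos one_lt_two).le⟩ ⟨h0.le, h⟩ h0
  · simpa [gNum_one] using
      strictAntiOn_gNum (mem_Ici.mpr h.le) (mem_Ici.mpr log_two_lt_one.le) h1

lemma gNum_neg {t : ℝ} (h1 : 1 < t) : gNum t < 0 := by
  simpa [gNum_one] using
    strictAntiOn_gNum (mem_Ici.mpr log_two_lt_one.le) (mem_Ici.mpr (log_two_lt_one.trans h1).le) h1

lemma hasDerivAt_g (t : ℝ) : HasDerivAt g (gNum t / (exp t - t)) t := by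
  have h := (((hasDerivAt_exp t).sub (hasDerivAt_id' t)).log (exp_sub_self_pos t).ne').sub
    ((hasDerivAt_pow 2 t).div_const 2)
  refine h.congr_deriv ?_
  simp only [Pi.sub_apply, gNum]
  field_simp [(exp_sub_self_pos t).ne']
  ring

lemma continuous_g : Continuous g :=
  continuous_iff_continuousAt.mpr fun t ↦ (hasDerivAt_g t).continuousAt

lemma strictMonoOn_g : StrictMonoOn g (Icc 0 1) := by
  refine strictMonoOn_of_deriv_pos (convex_Icc _ _) continuous_g.continuousOn fun t ht ↦ ?_
  rw [interior_Icc] at ht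
  rw [(hasDerivAt_g t).deriv]
  exact div_pos (gNum_pos ht.1 ht.2) (exp_sub_self_pos t)

lemma strictAntiOn_g : StrictAntiOn g (Ici 1) := by
  refine strictAntiOn_of_deriv_neg (convex_Ici _) continuous_g.continuousOn fun t ht ↦ ?_
  rw [interior_Ici] at ht
  rw [(hasDerivAt_g t).deriv]
  exact div_neg_of_neg_of_pos (gNum_neg ht) (exp_sub_self_pos t)

lemma g_zero : g 0 = 0 := by simp [g]

lemma g_pos {t : ℝ} (h0 : 0 < t) (h1 : t ≤ 1) : 0 < g t := by
  simpa [g_zero] using strictMonoOn_g ⟨le_rfl, zero_le_one⟩ ⟨h0.le, h1⟩ h0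

lemma one_lt_of_g_eq_zero {t : ℝ} (h0 : 0 < t) (hg : g t = 0) : 1 < t := by
  by_contra! h
  exact (g_pos h0 h).ne' hg

lemma eq_of_g_eq_zero {s t : ℝ} (hs : 0 < s) (ht : 0 < t) (hgs : g s = 0) (hgt : g t = 0) :
    s = t :=
  strictAntiOn_g.injOn (one_lt_of_g_eq_zero hs hgs).le (one_lt_of_g_eq_zero ht hgt).le
    (hgs.trans hgt.symm)

lemma equation_iff_g_sqrt_eq_zero {μ : ℝ} (hμ : 0 < μ) :
    1 - exp (√μ) / √μ + exp (μ / 2) / √μ = 0 ↔ g (√μ) = 0 := by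
  have hs : 0 < √μ := sqrt_pos.mpr hμ
  calc 1 - exp (√μ) / √μ + exp (μ / 2) / √μ = 0
      ↔ exp (√μ) - √μ = exp (μ / 2) := by
        rw [← mul_left_inj' hs.ne', zero_mul, add_mul, sub_mul, div_mul_cancel₀ _ hs.ne',
          div_mul_cancel₀ _ hs.ne', one_mul]
        constructor <;> intro h <;> linarith
    _ ↔ log (exp (√μ) - √μ) = μ / 2 :=
        ⟨fun h ↦ by rw [h, log_exp], fun h ↦ by rw [← h, exp_log (exp_sub_self_pos _)]⟩
    _ ↔ g (√μ) = 0 := by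
        rw [g, sq_sqrt hμ.le, sub_eq_zero]

lemma exp_0_96_le : exp 0.96 ≤ 2.6116966 := by
  refine (exp_bound' (by norm_num) (by norm_num) (by norm_num : 0 < 10)).trans ?_
  norm_num [Finset.sum_range_succ, Nat.factorial]

lemma le_exp_1_38564 : (3.9973834 : ℝ) ≤ exp 1.38564 := by
  refine le_trans ?_ (sum_le_exp_of_nonneg (by norm_num) 14)
  norm_num [Finset.sum_range_succ, Nat.factorial]

lemma exp_0_6946225_le : exp 0.6946225 ≤ 2.002953 := by
  refine (exp_bound' (by norm_num) (by norm_num) (by norm_num : 0 < 12)).trans ?_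
  norm_num [Finset.sum_range_succ, Nat.factorial]

lemma le_exp_0_965 : (2.6247 : ℝ) ≤ exp 0.965 := by
  refine le_trans ?_ (sum_le_exp_of_nonneg (by norm_num) 12)
  norm_num [Finset.sum_range_succ, Nat.factorial]

lemma g_sqrt_1_92_pos : 0 < g (√1.92) := by
  have hlb : (1.38564 : ℝ) ≤ √1.92 := (le_sqrt (by norm_num) (by norm_num)).mpr (by norm_num)
  have hub : √1.92 ≤ 1.385641 := (sqrt_le_left (by norm_num)).mpr (by norm_num)
  have hexp : exp 1.38564 ≤ exp (√1.92) := exp_le_exp.mpr hlb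
  have hlog : 0.96 < log (exp (√1.92) - √1.92) := by
    rw [lt_log_iff_exp_lt (exp_sub_self_pos _)]
    linarith [exp_0_96_le, le_exp_1_38564]
  rw [g, sq_sqrt (by norm_num)]
  linarith

lemma g_sqrt_1_93_neg : g (√1.93) < 0 := by
  have hlb : (1.389244 : ℝ) ≤ √1.93 := (le_sqrt (by norm_num) (by norm_num)).mpr (by norm_num)
  have hub : √1.93 ≤ 1.389245 := (sqrt_le_left (by norm_num)).mpr (by norm_num)
  have hexp : exp (√1.93) ≤ 2.002953 ^ 2 :=
    calc exp (√1.93) ≤ exp 1.389245 := exp_le_exp.mpr hub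
      _ = exp 0.6946225 ^ 2 := by rw [sq, ← exp_add]; norm_num
      _ ≤ 2.002953 ^ 2 := pow_le_pow_left₀ (exp_pos _).le exp_0_6946225_le 2
  have hlog : log (exp (√1.93) - √1.93) < 0.965 := by
    rw [log_lt_iff_lt_exp (exp_sub_self_pos _)]
    linarith [le_exp_0_965]
  rw [g, sq_sqrt (by norm_num)]
  linarith

end MuBar

theorem mu_bar_exists_unique :
    ∃ μ : ℝ, (0 < μ ∧ 1 - exp (Real.sqrt μ) / Real.sqrt μ + exp (μ / 2) / Real.sqrt μ = 0) ∧
      (∀ μ' : ℝ, 0 < μ' →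
        1 - exp (Real.sqrt μ') / Real.sqrt μ' + exp (μ' / 2) / Real.sqrt μ' = 0 → μ' = μ) ∧
      μ ∈ Set.Ioo (1.92 : ℝ) 1.93 := by
  obtain ⟨μ, hμ, hgμ⟩ : ∃ μ ∈ Ioo (1.92 : ℝ) 1.93, MuBar.g (√μ) = 0 :=
    intermediate_value_Ioo' (by norm_num) (MuBar.continuous_g.comp continuous_sqrt).continuousOn
      ⟨MuBar.g_sqrt_1_93_neg, MuBar.g_sqrt_1_92_pos⟩
  have hμ0 : 0 < μ := by linarith [hμ.1]
  refine ⟨μ, ⟨hμ0, (MuBar.equation_iff_g_sqrt_eq_zero hμ0).mpr hgμ⟩, fun μ' hμ' h ↦ ?_, hμ⟩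
  have hsqrt : √μ' = √μ := MuBar.eq_of_g_eq_zero (sqrt_pos.mpr hμ') (sqrt_pos.mpr hμ0)
    ((MuBar.equation_iff_g_sqrt_eq_zero hμ').mp h) hgμ
  rwa [sqrt_inj hμ'.le hμ0.le] at hsqrt
end

section
/- Let μ̄ be the unique positive root of 1 - e^{√μ}/√μ + e^{μ/2}/√μ = 0. Then the value α = e^{-√μ̄}(1 - e^{√μ̄} + √μ̄)/(e^{-μ̄/2} - 1) satisfies 0.653 < α < 0.654. -/
/-!
With `s = √μ`, the root equation reads `exp (s² / 2) = exp s - s`, i.e. `ψ s = 0` for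
`ψ x = log (exp x - x) - x² / 2`. The numerator of `ψ'` factors as `(1 - x) (exp x - 1 - x)`,
so `ψ` rises on `[0, 1]` and falls on `[1, ∞)`; as `ψ 0 = 0`, the positive zero `s` exceeds 1
and is bracketed by the signs of `ψ` at `1.3845` and `1.387`. The root equation also collapses
`α` to `exp (s² / 2 - s)`, which increases for `s ≥ 1`, and Taylor bounds for `exp` at the two
ends of the bracket give the digits.
-/

open Real

lemma lt_exp_of_lt_taylor {x c : ℝ} (hx : |x| ≤ 1) {n : ℕ} (hn : 0 < n)
    (h : c < ∑ m ∈ Finset.range n, x ^ m / m.factorial - |x| ^ n * (n.succ / (n.factorial * n))) :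
    c < exp x := by
  linarith [(abs_le.1 (exp_bound hx hn)).1]

lemma exp_lt_of_taylor_lt {x c : ℝ} (hx : |x| ≤ 1) {n : ℕ} (hn : 0 < n)
    (h : ∑ m ∈ Finset.range n, x ^ m / m.factorial + |x| ^ n * (n.succ / (n.factorial * n)) < c) :
    exp x < c := by
  linarith [(abs_le.1 (exp_bound hx hn)).2]

lemma exp_sub_self_pos (x : ℝ) : 0 < exp x - x := by
  linarith [add_one_le_exp x]

noncomputable def psi (x : ℝ) : ℝ := log (exp x - x) - x ^ 2 / 2

lemma psi_pos_iff {x : ℝ} : 0 < psi x ↔ exp (x ^ 2 / 2) < exp x - x := by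
  rw [psi, sub_pos, lt_log_iff_exp_lt (exp_sub_self_pos x)]

lemma psi_neg_iff {x : ℝ} : psi x < 0 ↔ exp x - x < exp (x ^ 2 / 2) := by
  rw [psi, sub_neg, log_lt_iff_lt_exp (exp_sub_self_pos x)]

lemma psi_eq_zero_iff {x : ℝ} : psi x = 0 ↔ exp (x ^ 2 / 2) = exp x - x := by
  rw [psi, sub_eq_zero, eq_comm, ← exp_eq_exp, exp_log (exp_sub_self_pos x)]

lemma hasDerivAt_psi (x : ℝ) :
    HasDerivAt psi ((1 - x) * (exp x - 1 - x) / (exp x - x)) x := by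
  have h : HasDerivAt psi ((exp x - 1) / (exp x - x) - x) x := by
    have := (((hasDerivAt_exp x).sub (hasDerivAt_id' x)).log (exp_sub_self_pos x).ne').sub
      ((hasDerivAt_pow 2 x).div_const 2)
    norm_num at this
    exact this
  convert h using 1
  field_simp [(exp_sub_self_pos x).ne']
  ring

lemma continuous_psi : Continuous psi :=
  ((continuous_exp.sub continuous_id).log fun x => (exp_sub_self_pos x).ne').sub
    ((continuous_pow 2).div_const 2)

lemma psi_strictMonoOn : StrictMonoOn psi (Set.Icc 0 1) := by
  refine strictMonoOn_of_deriv_pos (convex_Icc 0 1) continuous_psi.continuousOn fun x hx => ?_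
  rw [interior_Icc] at hx
  rw [(hasDerivAt_psi x).deriv]
  have := add_one_lt_exp hx.1.ne'
  exact div_pos (mul_pos (by linarith [hx.2]) (by linarith)) (exp_sub_self_pos x)

lemma psi_strictAntiOn : StrictAntiOn psi (Set.Ici 1) := by
  refine strictAntiOn_of_deriv_neg (convex_Ici 1) continuous_psi.continuousOn fun x hx => ?_
  rw [interior_Ici] at hx
  rw [(hasDerivAt_psi x).deriv]
  have := add_one_lt_exp (show x ≠ 0 by linarith [hx.out])
  exact div_neg_of_neg_of_pos (mul_neg_of_neg_of_pos (by linarith [hx.out]) (by linarith))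
    (exp_sub_self_pos x)

lemma one_lt_of_psi_eq_zero {s : ℝ} (hs : 0 < s) (hψ : psi s = 0) : 1 < s := by
  by_contra! h
  have h0 : psi 0 = 0 := by simp [psi]
  linarith [psi_strictMonoOn ⟨le_rfl, zero_le_one⟩ ⟨hs.le, h⟩ hs]

-- The Taylor bounds need `|x| ≤ 1`, so `exp` beyond 1 is evaluated as a square.
lemma psi_1_3845_pos : 0 < psi 1.3845 := by
  have h1 : 1.998206 < exp 0.69225 :=
    lt_exp_of_lt_taylor (n := 9) (by norm_num [abs_le]) (by norm_num)
      (by norm_num [Finset.sum_range_succ, Nat.factorial])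
  have h2 : exp 0.958420125 < 2.6075736 :=
    exp_lt_of_taylor_lt (n := 9) (by norm_num [abs_le]) (by norm_num)
      (by norm_num [Finset.sum_range_succ, Nat.factorial])
  rw [psi_pos_iff]
  calc exp (1.3845 ^ 2 / 2) = exp 0.958420125 := by norm_num
    _ < 1.998206 ^ 2 - 1.3845 := by linarith
    _ < exp 0.69225 ^ 2 - 1.3845 := by gcongr
    _ = exp 1.3845 - 1.3845 := by rw [← exp_nat_mul]; norm_num

lemma psi_1_387_neg : psi 1.387 < 0 := by
  have h1 : exp 0.6935 < 2.0007058 :=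
    exp_lt_of_taylor_lt (n := 9) (by norm_num [abs_le]) (by norm_num)
      (by norm_num [Finset.sum_range_succ, Nat.factorial])
  have h2 : 2.61662 < exp 0.9618845 :=
    lt_exp_of_lt_taylor (n := 11) (by norm_num [abs_le]) (by norm_num)
      (by norm_num [Finset.sum_range_succ, Nat.factorial])
  rw [psi_neg_iff]
  calc exp 1.387 - 1.387 = exp 0.6935 ^ 2 - 1.387 := by rw [← exp_nat_mul]; norm_num
    _ < 2.0007058 ^ 2 - 1.387 := by gcongr
    _ < exp 0.9618845 := by linarith
    _ = exp (1.387 ^ 2 / 2) := by norm_num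

lemma exp_half_sq_eq_of_root {s : ℝ} (hs : 0 < s)
    (hroot : 1 - exp s / s + exp (s ^ 2 / 2) / s = 0) : exp (s ^ 2 / 2) = exp s - s := by
  field_simp at hroot
  linarith

lemma alpha_eq_exp {s : ℝ} (hs : 0 < s) (h : exp (s ^ 2 / 2) = exp s - s) :
    exp (-s) * (1 - exp s + s) / (exp (-(s ^ 2 / 2)) - 1) = exp (s ^ 2 / 2 - s) := by
  have ht := (exp_sub_self_pos s).ne'
  have hden : 1 - exp s + s ≠ 0 := by linarith [add_one_lt_exp hs.ne']
  have hinv : (exp s - s)⁻¹ - 1 = (1 - exp s + s) / (exp s - s) := by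
    field_simp
    ring
  rw [exp_neg, exp_neg, exp_sub, h, hinv]
  field_simp

theorem alpha_bounds (μ : ℝ) (hμ : 0 < μ)
    (hroot : 1 - exp (Real.sqrt μ) / Real.sqrt μ + exp (μ / 2) / Real.sqrt μ = 0) :
    0.653 < exp (-Real.sqrt μ) * (1 - exp (Real.sqrt μ) + Real.sqrt μ) / (exp (-(μ / 2)) - 1) ∧
    exp (-Real.sqrt μ) * (1 - exp (Real.sqrt μ) + Real.sqrt μ) / (exp (-(μ / 2)) - 1) < 0.654 := by
  obtain ⟨s, hs, rfl⟩ : ∃ s, 0 < s ∧ μ = s ^ 2 := ⟨√μ, sqrt_pos.2 hμ, (sq_sqrt hμ.le).symm⟩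
  rw [sqrt_sq hs.le] at hroot ⊢
  have hE := exp_half_sq_eq_of_root hs hroot
  have hψ : psi s = 0 := psi_eq_zero_iff.2 hE
  have h1 : (1 : ℝ) ≤ s := (one_lt_of_psi_eq_zero hs hψ).le
  have hlo : 1.3845 < s :=
    (psi_strictAntiOn.lt_iff_gt h1 (by norm_num : (1 : ℝ) ≤ 1.3845)).1 (hψ ▸ psi_1_3845_pos)
  have hhi : s < 1.387 :=
    (psi_strictAntiOn.lt_iff_gt (by norm_num : (1 : ℝ) ≤ 1.387) h1).1 (hψ ▸ psi_1_387_neg)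
  rw [alpha_eq_exp hs hE]
  constructor
  · calc (0.653 : ℝ) < exp (1.3845 ^ 2 / 2 - 1.3845) :=
          lt_exp_of_lt_taylor (n := 9) (by norm_num [abs_le]) (by norm_num)
            (by norm_num [Finset.sum_range_succ, Nat.factorial])
      _ < exp (s ^ 2 / 2 - s) := exp_lt_exp.2 (by nlinarith)
  · calc exp (s ^ 2 / 2 - s) < exp (1.387 ^ 2 / 2 - 1.387) := exp_lt_exp.2 (by nlinarith)
      _ < 0.654 :=
          exp_lt_of_taylor_lt (n := 9) (by norm_num [abs_le]) (by norm_num)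
            (by norm_num [Finset.sum_range_succ, Nat.factorial])
end

section
/- For β ∈ [0, 1/(e-1)] and all a ∈ [0,1), the function J(a) = ∫_{(1+β)/e}^{1+β} a^{t-1}(t-1)/t dt satisfies J(a) ≤ 0. -/
/-!
For `0 < a ≤ 1` the factor `a ^ (t - 1)` only shrinks `t - 1` towards `0`, so the integrand is
dominated by `(t - 1) / t`, whose integral over `[c / e, c]` is `c (1 - 1 / e) - 1` with
`c = 1 + β`; this is `≤ 0` exactly when `β ≤ 1 / (e - 1)`. For `a = 0` the integrand vanishes
identically.
-/

open Real intervalIntegral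

lemma rpow_mul_self_le_self {a : ℝ} (ha0 : 0 < a) (ha1 : a ≤ 1) (x : ℝ) : a ^ x * x ≤ x := by
  rcases le_total 0 x with hx | hx
  · exact mul_le_of_le_one_left hx (rpow_le_one ha0.le ha1 hx)
  · nlinarith [one_le_rpow_of_pos_of_le_one_of_nonpos ha0 ha1 hx]

lemma zero_rpow_mul_self (x : ℝ) : (0 : ℝ) ^ x * x = 0 := by
  rcases eq_or_ne x 0 with rfl | hx
  · simp
  · simp [zero_rpow hx]

lemma integral_sub_one_div_self {u v : ℝ} (h : (0 : ℝ) ∉ Set.uIcc u v) :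
    ∫ t in u..v, (t - 1) / t = v - u - log (v / u) := by
  have hne : ∀ t ∈ Set.uIcc u v, t ≠ 0 := fun t ht h0 => h (h0 ▸ ht)
  rw [integral_congr (g := fun t => 1 - t⁻¹) fun t ht => by
      field_simp [hne t ht],
    integral_sub intervalIntegrable_const (intervalIntegrable_inv hne continuousOn_id),
    integral_inv h]
  simp

lemma integral_rpow_mul_div_self_le {a u v : ℝ} (ha0 : 0 < a) (ha1 : a ≤ 1) (hu : 0 < u)
    (huv : u ≤ v) :
    ∫ t in u..v, a ^ (t - 1) * (t - 1) / t ≤ v - u - log (v / u) := by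
  have hpos : ∀ t ∈ Set.uIcc u v, 0 < t := fun t ht =>
    hu.trans_le (Set.uIcc_of_le huv ▸ ht).1
  have h0 : (0 : ℝ) ∉ Set.uIcc u v := fun h => (hpos 0 h).false
  rw [← integral_sub_one_div_self h0]
  refine integral_mono_on huv ?_ ?_ fun t ht => ?_
  · refine ContinuousOn.intervalIntegrable (ContinuousOn.div ?_ continuousOn_id
      fun t ht => (hpos t ht).ne')
    exact ((continuous_const.rpow (by fun_prop) fun _ => Or.inl ha0.ne').mul
      (by fun_prop)).continuousOn
  · exact ContinuousOn.intervalIntegrable (ContinuousOn.div (by fun_prop) continuousOn_id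
      fun t ht => (hpos t ht).ne')
  · exact div_le_div_of_nonneg_right (rpow_mul_self_le_self ha0 ha1 _)
      (hu.trans_le ht.1).le

theorem J_nonpos (β : ℝ) (hβ : β ∈ Set.Icc (0:ℝ) (1 / (exp 1 - 1)))
    (a : ℝ) (ha : a ∈ Set.Ico (0:ℝ) 1) :
    (∫ t in ((1 + β) / exp 1)..(1 + β), a ^ (t - 1) * (t - 1) / t) ≤ 0 := by
  obtain ⟨hβ0, hβ1⟩ := hβ
  obtain ⟨ha0, ha1⟩ := ha
  have he : 1 < exp 1 := one_lt_exp_iff.mpr one_pos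
  have hβe : β * (exp 1 - 1) ≤ 1 := (le_div_iff₀ (sub_pos.mpr he)).mp hβ1
  set c := 1 + β
  have hc : 0 < c := by positivity
  rcases ha0.eq_or_lt with rfl | ha0
  · simp [zero_rpow_mul_self]
  calc _ ≤ c - c / exp 1 - log (c / (c / exp 1)) :=
        integral_rpow_mul_div_self_le ha0 ha1.le (by positivity) (div_le_self hc.le he.le)
    _ = c * (exp 1 - 1) / exp 1 - 1 := by
        rw [div_div_cancel₀ hc.ne', log_exp]
        field_simp
    _ ≤ 0 := by
        rw [sub_nonpos, div_le_one (exp_pos 1)]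
        linarith
end

section
/- For β ∈ [0, 1/(e-1)] and all a ∈ [0,1), the inequality ∫_{(1+β)/e}^{1+β} (1 - a^t)/((1-a) t²) dt ≥ 1 holds. -/
/-!
Let `K = klFun a = a log a + 1 - a ≥ 0`. For fixed `t ≥ 0`, the function
`a ↦ 1 - t (1 - a) + t (t - 1) K - a ^ t` has derivative `t (1 + (t - 1) log a - a ^ (t - 1))`,
which is `≤ 0` because `exp x ≥ 1 + x`, and it vanishes at `a = 1`. Hence
`(1 - a ^ t) / t ≥ (1 - a) - (t - 1) K`: the right side is the tangent line at `t = 1` of the convex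
function `t ↦ (1 - a ^ t) / t`. Integrating the resulting lower bound `((1 - a + K) / t - K) / (1 - a)`
of the integrand over `[c / e, c]`, with `c = 1 + β`, gives `1 + K (1 - (c - c / e)) / (1 - a)`, and
`c - c / e ≤ 1` is exactly `β ≤ 1 / (e - 1)`.
-/

open Real intervalIntegral InformationTheory Set

theorem rpow_le_one_sub_mul_add_mul_klFun {a t : ℝ} (ha : a ∈ Icc 0 1) (ht : 0 ≤ t) :
    a ^ t ≤ 1 - t * (1 - a) + t * (t - 1) * klFun a := by
  set F : ℝ → ℝ := fun x ↦ 1 - t * (1 - x) + t * (t - 1) * klFun x - x ^ t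
  have hF_deriv : ∀ x ∈ Ioo (0 : ℝ) 1,
      HasDerivAt F (t * (1 + (t - 1) * log x - x ^ (t - 1))) x := fun x hx ↦
    ((((hasDerivAt_id' x).const_sub 1).const_mul t |>.const_sub 1).add
      ((hasDerivAt_klFun hx.1.ne').const_mul (t * (t - 1))) |>.sub
      (hasDerivAt_rpow_const (p := t) (Or.inl hx.1.ne'))).congr_deriv (by ring)
  have hF_anti : AntitoneOn F (Icc 0 1) := by
    refine antitoneOn_of_deriv_nonpos (convex_Icc 0 1) ?_ ?_ ?_
    · exact ((continuous_const.sub (continuous_const.mul (continuous_const.sub continuous_id))).add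
        (continuous_const.mul continuous_klFun)).continuousOn.sub
        (fun x _ ↦ (continuousAt_rpow_const x t (Or.inr ht)).continuousWithinAt)
    · rw [interior_Icc]
      exact fun x hx ↦ (hF_deriv x hx).differentiableAt.differentiableWithinAt
    · rw [interior_Icc]
      intro x hx
      rw [(hF_deriv x hx).deriv]
      have : 1 + (t - 1) * log x ≤ x ^ (t - 1) := by
        rw [rpow_def_of_pos hx.1]
        linarith [add_one_le_exp (log x * (t - 1))]
      exact mul_nonpos_of_nonneg_of_nonpos ht (by linarith)
  have := hF_anti ha ⟨zero_le_one, le_rfl⟩ ha.2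
  simp only [F, klFun_one, one_rpow] at this
  linarith

theorem div_le_one_sub_rpow_div {a t : ℝ} (ha : a ∈ Ico 0 1) (ht : 0 < t) :
    ((1 - a + klFun a) * t⁻¹ - klFun a) / (1 - a) ≤ (1 - a ^ t) / ((1 - a) * t ^ 2) := by
  have h1a : 0 < 1 - a := sub_pos.2 ha.2
  rw [show ((1 - a + klFun a) * t⁻¹ - klFun a) / (1 - a)
      = (t * (1 - a) - t * (t - 1) * klFun a) / ((1 - a) * t ^ 2) by field_simp; ring]
  gcongr ?_ / _
  linarith [rpow_le_one_sub_mul_add_mul_klFun ⟨ha.1, ha.2.le⟩ ht.le]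

theorem le_integral_one_sub_rpow_div {a x y : ℝ} (ha : a ∈ Ico 0 1) (hx : 0 < x) (hxy : x ≤ y) :
    ((1 - a + klFun a) * log (y / x) - klFun a * (y - x)) / (1 - a) ≤
      ∫ t in x..y, (1 - a ^ t) / ((1 - a) * t ^ 2) := by
  have hpos : ∀ t ∈ uIcc x y, 0 < t := fun t ht ↦ hx.trans_le (uIcc_of_le hxy ▸ ht).1
  have hinv : IntervalIntegrable (fun t : ℝ ↦ t⁻¹) MeasureTheory.volume x y :=
    (continuousOn_inv₀.mono fun t ht ↦ (hpos t ht).ne').intervalIntegrable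
  have hlower : IntervalIntegrable (fun t : ℝ ↦ ((1 - a + klFun a) * t⁻¹ - klFun a) / (1 - a))
      MeasureTheory.volume x y :=
    ((hinv.const_mul _).sub intervalIntegrable_const).div_const _
  have hupper : IntervalIntegrable (fun t : ℝ ↦ (1 - a ^ t) / ((1 - a) * t ^ 2))
      MeasureTheory.volume x y := by
    refine ContinuousOn.intervalIntegrable ?_
    refine (continuousOn_const.sub (continuousOn_const.rpow continuousOn_id
      fun t ht ↦ Or.inr (hpos t ht))).div (by fun_prop) fun t ht ↦ ?_
    have := hpos t ht
    have : 0 < 1 - a := sub_pos.2 ha.2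
    positivity
  calc ((1 - a + klFun a) * log (y / x) - klFun a * (y - x)) / (1 - a)
      = ∫ t in x..y, ((1 - a + klFun a) * t⁻¹ - klFun a) / (1 - a) := by
        rw [intervalIntegral.integral_div, integral_sub (hinv.const_mul _) intervalIntegrable_const,
          integral_const_mul, integral_inv_of_pos hx (hx.trans_le hxy), integral_const, smul_eq_mul,
          mul_comm (y - x)]
    _ ≤ ∫ t in x..y, (1 - a ^ t) / ((1 - a) * t ^ 2) :=
        integral_mono_on hxy hlower hupper fun t ht ↦
          div_le_one_sub_rpow_div ha (hx.trans_le ht.1)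

theorem key_pointwise_inequality (β : ℝ) (hβ : β ∈ Set.Icc (0:ℝ) (1 / (exp 1 - 1)))
    (a : ℝ) (ha : a ∈ Set.Ico (0:ℝ) 1) :
    (∫ t in ((1 + β) / exp 1)..(1 + β), (1 - a ^ t) / ((1 - a) * t ^ 2)) ≥ 1 := by
  have he : 1 < exp 1 := one_lt_exp_iff.2 one_pos
  have hc : 0 < 1 + β := by linarith [hβ.1]
  have hlog : log ((1 + β) / ((1 + β) / exp 1)) = 1 := by rw [div_div_cancel₀ hc.ne', log_exp]
  have hlen : (1 + β) - (1 + β) / exp 1 ≤ 1 := by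
    have : β * (exp 1 - 1) ≤ 1 := (le_div_iff₀ (sub_pos.2 he)).1 hβ.2
    rw [sub_le_iff_le_add, ← sub_le_iff_le_add', le_div_iff₀ (by positivity)]
    linarith
  refine le_trans ?_ (le_integral_one_sub_rpow_div ha (by positivity) (div_le_self hc.le he.le))
  rw [hlog, le_div_iff₀ (sub_pos.2 ha.2)]
  nlinarith [klFun_nonneg ha.1]
end

section
/- The function H(a) = ∫_{(1+β)/e}^{1+β} (1 - a^t)/((1-a)t²) dt is (weakly) decreasing on [0,1) for any β ∈ [0, 1/(e-1)], and lim_{a→1⁻} H(a) = 1. -/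
/-!
With `ω(a) = -a log a / (1 - a)` and `v_t(a) = (1 - a^t - t(1 - t) a log a) / (1 - a)`, the
integrand is `v_t(a) / t² - ω(a) (1 - t) / t`. Here `ω` increases on `[0, 1)`, and `v_t`
decreases there for `t ≥ 0`: the numerator of `v_t'(a)` is `-ψ(a)`, where
`ψ(a) = (a - 1 - log a) t (t - 1) - (1 - a^t - t a^(t-1) (1 - a))` satisfies
`ψ'(a) = t (t - 1) (1 - a) (a^(t-2) - a⁻¹) ≤ 0` and `ψ(1) = 0`. Since
`∫_c^d (1 - t) / t dt = log (d / c) - (d - c)`, which for `c = (1 + β)/e`, `d = 1 + β` is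
`1 - (1 + β)(1 - 1/e) ≥ 0` exactly when `β ≤ 1/(e - 1)`, `H` is decreasing.

By the mean value theorem `(1 - a^t) / (1 - a) = t ξ^(t-1)` for some `ξ ∈ (a, 1)`, so the
integrand converges to `1/t` uniformly on `[c, d]` as `a → 1⁻`, and `H(a) → log (d / c) = 1`.
-/

open Real Filter intervalIntegral Set Topology
open MeasureTheory (volume ae_of_all)

theorem one_sub_rpow_sub_mul_rpow_le {a t : ℝ} (ha0 : 0 < a) (ha1 : a ≤ 1) (ht : 0 ≤ t) :
    1 - a ^ t - t * a ^ (t - 1) * (1 - a) ≤ (a - 1 - log a) * (t * (t - 1)) := by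
  set ψ : ℝ → ℝ := fun x ↦
    (x - 1 - log x) * (t * (t - 1)) - (1 - x ^ t - t * x ^ (t - 1) * (1 - x))
  have hψ : ∀ x ∈ Ioi (0 : ℝ), HasDerivAt ψ
      (t * (t - 1) * (1 - x) * (x ^ (t - 1 - 1) - x ^ (-1 : ℝ))) x := by
    intro x hx
    have hx0 : x ≠ 0 := hx.ne'
    have h1 := hasDerivAt_rpow_const (p := t) (Or.inl hx0)
    have h2 := hasDerivAt_rpow_const (p := t - 1) (Or.inl hx0)
    have := ((((hasDerivAt_id' x).sub_const 1).sub (hasDerivAt_log hx0)).mul_const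
      (t * (t - 1))).sub ((h1.const_sub 1).sub ((h2.const_mul t).mul
        ((hasDerivAt_id' x).const_sub 1)))
    refine this.congr_deriv ?_
    rw [rpow_neg_one]
    field_simp
    ring
  have hanti : AntitoneOn ψ (Ioc 0 1) := by
    refine antitoneOn_of_deriv_nonpos (convex_Ioc 0 1) ?_ ?_ ?_
    · exact fun x hx ↦ (hψ x hx.1).continuousAt.continuousWithinAt
    · rw [interior_Ioc]
      exact fun x hx ↦ (hψ x hx.1).differentiableAt.differentiableWithinAt
    · rw [interior_Ioc]
      intro x hx
      rw [(hψ x hx.1).deriv]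
      have key : t * (t - 1) * (x ^ (t - 1 - 1) - x ^ (-1 : ℝ)) ≤ 0 := by
        rcases le_total 1 t with h | h
        · exact mul_nonpos_of_nonneg_of_nonpos (mul_nonneg ht (by linarith)) (sub_nonpos.2
            (rpow_le_rpow_of_exponent_ge hx.1 hx.2.le (by linarith)))
        · exact mul_nonpos_of_nonpos_of_nonneg (mul_nonpos_of_nonneg_of_nonpos ht (by linarith))
            (sub_nonneg.2 (rpow_le_rpow_of_exponent_ge hx.1 hx.2.le (by linarith)))
      rw [mul_right_comm]
      exact mul_nonpos_of_nonpos_of_nonneg key (by linarith [hx.2])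
  have := hanti ⟨ha0, ha1⟩ ⟨one_pos, le_rfl⟩ ha1
  simp only [ψ, log_one, one_rpow, sub_self, mul_zero, zero_mul] at this
  linarith

theorem antitoneOn_div_one_sub {f f' : ℝ → ℝ} (hf : ContinuousOn f (Ico 0 1))
    (hf' : ∀ x ∈ Ioo (0 : ℝ) 1, HasDerivAt f (f' x) x)
    (h : ∀ x ∈ Ioo (0 : ℝ) 1, f' x * (1 - x) + f x ≤ 0) :
    AntitoneOn (fun x ↦ f x / (1 - x)) (Ico 0 1) := by
  have hderiv : ∀ x ∈ Ioo (0 : ℝ) 1,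
      HasDerivAt (fun x ↦ f x / (1 - x)) ((f' x * (1 - x) + f x) / (1 - x) ^ 2) x := by
    intro x hx
    refine ((hf' x hx).div ((hasDerivAt_id' x).const_sub 1) (by linarith [hx.2])).congr_deriv ?_
    ring
  refine antitoneOn_of_deriv_nonpos (convex_Ico 0 1) ?_ ?_ ?_
  · exact hf.div (continuousOn_const.sub continuousOn_id) fun x hx ↦ by linarith [hx.2]
  · rw [interior_Ico]
    exact fun x hx ↦ (hderiv x hx).differentiableAt.differentiableWithinAt
  · rw [interior_Ico]
    intro x hx
    rw [(hderiv x hx).deriv]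
    exact div_nonpos_of_nonpos_of_nonneg (h x hx) (sq_nonneg _)

theorem monotoneOn_negMulLog_div_one_sub :
    MonotoneOn (fun x ↦ negMulLog x / (1 - x)) (Ico 0 1) := by
  have := antitoneOn_div_one_sub (f := fun x ↦ -negMulLog x) (f' := fun x ↦ log x + 1)
    continuous_negMulLog.neg.continuousOn
    (fun x hx ↦ (hasDerivAt_negMulLog hx.1.ne').neg.congr_deriv (by ring))
    (fun x hx ↦ by
      simp only [negMulLog]
      linear_combination log_le_sub_one_of_pos hx.1)
  simpa only [neg_div, neg_neg] using this.neg

theorem antitoneOn_one_sub_rpow_add_mul_negMulLog_div_one_sub {t : ℝ} (ht : 0 ≤ t) :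
    AntitoneOn (fun x ↦ (1 - x ^ t + t * (1 - t) * negMulLog x) / (1 - x)) (Ico 0 1) := by
  refine antitoneOn_div_one_sub (f' := fun x ↦ -(t * x ^ (t - 1)) + t * (1 - t) * (-log x - 1))
    ?_ (fun x hx ↦ ?_) (fun x hx ↦ ?_)
  · exact Continuous.continuousOn (by
      fun_prop (disch := exact fun x ↦ Or.inr ht))
  · exact ((hasDerivAt_rpow_const (Or.inl hx.1.ne')).const_sub 1).add
      ((hasDerivAt_negMulLog hx.1.ne').const_mul _)
  · have := one_sub_rpow_sub_mul_rpow_le hx.1 hx.2.le ht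
    simp only [negMulLog]
    linarith

theorem pos_of_mem_uIcc {c d t : ℝ} (hc : 0 < c) (hd : 0 < d) (ht : t ∈ uIcc c d) : 0 < t :=
  (lt_min hc hd).trans_le ht.1

theorem intervalIntegrable_of_continuousAt_pos {f : ℝ → ℝ} {c d : ℝ} (hc : 0 < c)
    (hd : 0 < d) (hf : ∀ t, 0 < t → ContinuousAt f t) : IntervalIntegrable f volume c d :=
  ContinuousOn.intervalIntegrable fun t ht ↦ (hf t (pos_of_mem_uIcc hc hd ht)).continuousWithinAt

theorem integral_one_sub_div_self {c d : ℝ} (hc : 0 < c) (hd : 0 < d) :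
    ∫ t in c..d, (1 - t) / t = log (d / c) - (d - c) := by
  rw [integral_congr (g := fun t ↦ t⁻¹ - 1) fun t ht ↦
      by field_simp [(pos_of_mem_uIcc hc hd ht).ne'],
    integral_sub (intervalIntegrable_of_continuousAt_pos hc hd fun t ht ↦
      continuousAt_inv₀ ht.ne') intervalIntegrable_const, integral_inv_of_pos hc hd]
  simp

theorem one_sub_rpow_div_eq {a t : ℝ} (ha : a ≠ 1) (ht : t ≠ 0) :
    (1 - a ^ t) / ((1 - a) * t ^ 2) =
      (1 - a ^ t + t * (1 - t) * negMulLog a) / (1 - a) / t ^ 2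
        - negMulLog a / (1 - a) * ((1 - t) / t) := by
  have : 1 - a ≠ 0 := sub_ne_zero.2 ha.symm
  field_simp
  ring

theorem antitoneOn_integral_one_sub_rpow_div {c d : ℝ} (hc : 0 < c) (hcd : c ≤ d)
    (hlog : d - c ≤ log (d / c)) :
    AntitoneOn (fun a ↦ ∫ t in c..d, (1 - a ^ t) / ((1 - a) * t ^ 2)) (Ico 0 1) := by
  have hd : 0 < d := hc.trans_le hcd
  set V : ℝ → ℝ → ℝ := fun a t ↦
    (1 - a ^ t + t * (1 - t) * negMulLog a) / (1 - a) / t ^ 2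
  have hV : ∀ a, IntervalIntegrable (V a) volume c d := fun a ↦
    intervalIntegrable_of_continuousAt_pos hc hd fun t ht ↦ by
      have := continuousAt_const_rpow' (a := a) ht.ne'
      fun_prop (disch := simp [ht.ne'])
  have hsplit : ∀ a ∈ Ico (0 : ℝ) 1, ∫ t in c..d, (1 - a ^ t) / ((1 - a) * t ^ 2) =
      (∫ t in c..d, V a t) - negMulLog a / (1 - a) * (log (d / c) - (d - c)) := by
    intro a ha
    rw [integral_congr fun t ht ↦ one_sub_rpow_div_eq ha.2.ne (pos_of_mem_uIcc hc hd ht).ne',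
      integral_sub (hV a) ((intervalIntegrable_of_continuousAt_pos hc hd fun t ht ↦ by
        fun_prop (disch := exact ht.ne')).const_mul _),
      integral_const_mul, integral_one_sub_div_self hc hd]
  intro a₁ ha₁ a₂ ha₂ ha
  have hVle : ∫ t in c..d, V a₂ t ≤ ∫ t in c..d, V a₁ t :=
    integral_mono_on hcd (hV a₂) (hV a₁) fun t ht ↦ div_le_div_of_nonneg_right
      (antitoneOn_one_sub_rpow_add_mul_negMulLog_div_one_sub (hc.trans_le ht.1).le ha₁ ha₂ ha)
      (sq_nonneg t)
  have hωle := mul_le_mul_of_nonneg_right (monotoneOn_negMulLog_div_one_sub ha₁ ha₂ ha)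
    (sub_nonneg.2 hlog)
  simp only [hsplit a₁ ha₁, hsplit a₂ ha₂]
  linarith

theorem abs_one_sub_rpow_div_one_sub_sub_le {a t : ℝ} (ha0 : 0 < a) (ha1 : a < 1) :
    |(1 - a ^ t) / (1 - a) - t| ≤ |t| * |a ^ (t - 1) - 1| := by
  obtain ⟨ξ, hξ, hslope⟩ :=
    exists_hasDerivAt_eq_slope (fun x ↦ x ^ t) (fun x ↦ t * x ^ (t - 1)) ha1 (fun x hx ↦
      (continuousAt_rpow_const x t (Or.inl (ha0.trans_le hx.1).ne')).continuousWithinAt)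
    fun x hx ↦ hasDerivAt_rpow_const (Or.inl (ha0.trans hx.1).ne')
  have hξ0 : 0 < ξ := ha0.trans hξ.1
  have hξa : |ξ ^ (t - 1) - 1| ≤ |a ^ (t - 1) - 1| := by
    rcases le_total 0 (t - 1) with h | h
    · exact abs_le_abs_of_nonpos (by linarith [rpow_le_one hξ0.le hξ.2.le h])
        (by linarith [rpow_le_rpow ha0.le hξ.1.le h])
    · exact abs_le_abs_of_nonneg
        (by linarith [one_le_rpow_of_pos_of_le_one_of_nonpos hξ0 hξ.2.le h])
        (by linarith [rpow_le_rpow_of_nonpos ha0 hξ.1.le h])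
  rw [one_rpow] at hslope
  rw [← hslope, show t * ξ ^ (t - 1) - t = t * (ξ ^ (t - 1) - 1) by ring, abs_mul]
  exact mul_le_mul_of_nonneg_left hξa (abs_nonneg t)

theorem abs_one_sub_rpow_div_sub_inv_le {a c d t : ℝ} (ha0 : 0 < a) (ha1 : a < 1) (hc : 0 < c)
    (htc : c ≤ t) (htd : t ≤ d) :
    |(1 - a ^ t) / ((1 - a) * t ^ 2) - t⁻¹| ≤
      (|a ^ (c - 1) - 1| + |a ^ (d - 1) - 1|) * t⁻¹ := by
  have ht : 0 < t := hc.trans_le htc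
  have hexp : |a ^ (t - 1) - 1| ≤ |a ^ (c - 1) - 1| + |a ^ (d - 1) - 1| := by
    have hc' := rpow_le_rpow_of_exponent_ge ha0 ha1.le (show c - 1 ≤ t - 1 by linarith)
    have hd' := rpow_le_rpow_of_exponent_ge ha0 ha1.le (show t - 1 ≤ d - 1 by linarith)
    rw [abs_le]
    constructor <;> linarith [le_abs_self (a ^ (c - 1) - 1), neg_abs_le (a ^ (d - 1) - 1),
      abs_nonneg (a ^ (c - 1) - 1), abs_nonneg (a ^ (d - 1) - 1)]
  have heq : (1 - a ^ t) / ((1 - a) * t ^ 2) - t⁻¹ = ((1 - a ^ t) / (1 - a) - t) / t ^ 2 := by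
    have : 1 - a ≠ 0 := by linarith
    field_simp
  calc |(1 - a ^ t) / ((1 - a) * t ^ 2) - t⁻¹|
      = |(1 - a ^ t) / (1 - a) - t| / t ^ 2 := by rw [heq, abs_div, abs_of_pos (pow_pos ht 2)]
    _ ≤ t * |a ^ (t - 1) - 1| / t ^ 2 := by
        gcongr
        simpa [abs_of_pos ht] using abs_one_sub_rpow_div_one_sub_sub_le (t := t) ha0 ha1
    _ = |a ^ (t - 1) - 1| * t⁻¹ := by field_simp
    _ ≤ _ := by gcongr

theorem tendsto_integral_one_sub_rpow_div {c d : ℝ} (hc : 0 < c) (hcd : c ≤ d) :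
    Tendsto (fun a ↦ ∫ t in c..d, (1 - a ^ t) / ((1 - a) * t ^ 2)) (𝓝[<] 1)
      (𝓝 (log (d / c))) := by
  have hd : 0 < d := hc.trans_le hcd
  set δ : ℝ → ℝ := fun a ↦ |a ^ (c - 1) - 1| + |a ^ (d - 1) - 1|
  have hδ : Tendsto δ (𝓝[<] 1) (𝓝 0) := by
    have : ContinuousAt δ 1 := by fun_prop (disch := exact Or.inl one_ne_zero)
    simpa [δ] using this.tendsto.mono_left nhdsWithin_le_nhds
  have hinv : IntervalIntegrable (fun t : ℝ ↦ t⁻¹) volume c d :=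
    intervalIntegrable_of_continuousAt_pos hc hd fun t ht ↦ continuousAt_inv₀ ht.ne'
  have hbound : ∀ a ∈ Ioo (0 : ℝ) 1,
      ‖(∫ t in c..d, (1 - a ^ t) / ((1 - a) * t ^ 2)) - log (d / c)‖ ≤
        δ a * log (d / c) := by
    intro a ha
    have hF : IntervalIntegrable (fun t ↦ (1 - a ^ t) / ((1 - a) * t ^ 2)) volume c d :=
      intervalIntegrable_of_continuousAt_pos hc hd fun t ht ↦ by
        have := continuousAt_const_rpow' (a := a) ht.ne'
        fun_prop (disch := simp [ht.ne', (sub_pos.2 ha.2).ne'])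
    rw [← integral_inv_of_pos hc hd, ← integral_sub hF hinv, ← integral_const_mul]
    exact norm_integral_le_of_norm_le hcd (ae_of_all _ fun t ht ↦
      abs_one_sub_rpow_div_sub_inv_le ha.1 ha.2 hc ht.1.le ht.2) (hinv.const_mul _)
  rw [tendsto_iff_norm_sub_tendsto_zero]
  refine squeeze_zero' (Eventually.of_forall fun _ ↦ norm_nonneg _) ?_
    (by simpa using hδ.mul_const (log (d / c)))
  filter_upwards [Ioo_mem_nhdsLT one_pos] with a ha using hbound a ha

theorem H_decreasing_and_limit (β : ℝ) (hβ : β ∈ Set.Icc (0:ℝ) (1 / (exp 1 - 1)))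
    (H : ℝ → ℝ)
    (hH : ∀ a, H a = ∫ t in ((1 + β) / exp 1)..(1 + β), (1 - a ^ t) / ((1 - a) * t ^ 2)) :
    AntitoneOn H (Set.Ico (0:ℝ) 1) ∧
    Tendsto H (nhdsWithin 1 (Set.Iio 1)) (nhds 1) := by
  obtain ⟨hβ0, hβ1⟩ := hβ
  have he : 1 < exp 1 := one_lt_exp_iff.2 one_pos
  have hc : 0 < (1 + β) / exp 1 := by positivity
  have hcd : (1 + β) / exp 1 ≤ 1 + β := div_le_self (by linarith) he.le
  have hlog : log ((1 + β) / ((1 + β) / exp 1)) = 1 := by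
    rw [div_div_cancel₀ (by positivity), log_exp]
  have hwidth : 1 + β - (1 + β) / exp 1 ≤ 1 := by
    have := (le_div_iff₀ (sub_pos.2 he)).1 hβ1
    linarith [(le_div_iff₀ (exp_pos 1)).2 (show β * exp 1 ≤ 1 + β by linarith)]
  obtain rfl : H = _ := funext hH
  exact ⟨antitoneOn_integral_one_sub_rpow_div hc hcd (hwidth.trans hlog.ge),
    by simpa only [hlog] using tendsto_integral_one_sub_rpow_div hc hcd⟩
end

section
/- Let S₁,…,S_k, X₁,…,X_{i-1}, X_i be i.i.d. continuous (atomless) real random variables. Conditioned on reaching step i, any MRS algorithm's decision to stop at step i depends only on the relative ranks of X_i and a uniformly random f(i)-subset of the previous values, and these ranks are distributed as a uniform draw of f(i)+1 ranks without replacement from [k+i]; consequently, conditioned on the algorithm reaching step i, the set {S₁,…,S_k, X₁,…,X_{i-1}} is distributed as k+i-1 fresh i.i.d. samples from the same distribution. -/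
/-!
Ties have probability zero, and off the ties `E` is the preimage under `V` of a union of rank
classes `strictSortedBy σ`, the vectors `v` with `v ∘ σ` strictly increasing. The i.i.d. law
of `V` is invariant under permuting coordinates, and so is the symmetric set `S`; since
composing with `σ` maps the rank class of `1` onto that of `σ`, every rank class carries the
same mass `c` inside `S` and the same mass `d` overall. Hence if `E` consists of `q` of the
`m!` rank classes, `P (E ∩ V⁻¹ S) = q c`, `P E = q d`, `P (V⁻¹ S) = m! c` and `1 = m! d`.
-/

open MeasureTheory Set Function ProbabilityTheory

section RankClasses

variable {α : Type*} [LinearOrder α] {m : ℕ}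

def strictSortedBy (σ : Equiv.Perm (Fin m)) : Set (Fin m → α) := {v | StrictMono (v ∘ σ)}

lemma injective_of_mem_strictSortedBy {σ : Equiv.Perm (Fin m)} {v : Fin m → α}
    (hv : v ∈ strictSortedBy σ) : Injective v :=
  (σ.injective_comp v).1 hv.injective

lemma lt_iff_lt_of_mem_strictSortedBy {σ : Equiv.Perm (Fin m)} {v w : Fin m → α}
    (hv : v ∈ strictSortedBy σ) (hw : w ∈ strictSortedBy σ) (j j' : Fin m) :
    v j < v j' ↔ w j < w j' := by
  simpa using (hv.lt_iff_lt (a := σ.symm j) (b := σ.symm j')).trans hw.lt_iff_lt.symm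

lemma iUnion_strictSortedBy : ⋃ σ, strictSortedBy σ = {v : Fin m → α | Injective v} := by
  refine Subset.antisymm (iUnion_subset fun σ v hv => injective_of_mem_strictSortedBy hv) ?_
  intro v hv
  exact mem_iUnion.2 ⟨Tuple.sort v,
    (Tuple.monotone_sort v).strictMono_of_injective (hv.comp (Tuple.sort v).injective)⟩

lemma pairwise_disjoint_strictSortedBy :
    Pairwise (Disjoint on (strictSortedBy : Equiv.Perm (Fin m) → Set (Fin m → α))) := by
  intro σ τ hστ
  refine disjoint_left.2 fun v hσ hτ => hστ (Equiv.ext fun a => ?_)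
  have hrange : range (v ∘ σ) = range (v ∘ τ) := by
    rw [σ.surjective.range_comp, τ.surjective.range_comp]
  exact injective_of_mem_strictSortedBy hσ (congrFun ((StrictMono.range_inj hσ hτ).1 hrange) a)

lemma preimage_comp_strictSortedBy (ρ σ : Equiv.Perm (Fin m)) :
    (fun v : Fin m → α => v ∘ ρ) ⁻¹' strictSortedBy σ = strictSortedBy (ρ * σ) :=
  rfl

lemma exists_inter_injective_eq_preimage_biUnion_strictSortedBy {Ω : Type*}
    (V : Ω → Fin m → α) (E : Set Ω)
    (hrank : ∀ ω ω' : Ω,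
      (∀ j j' : Fin m, V ω j < V ω j' ↔ V ω' j < V ω' j') → (ω ∈ E ↔ ω' ∈ E)) :
    ∃ Q : Finset (Equiv.Perm (Fin m)),
      E ∩ {ω | Injective (V ω)} = V ⁻¹' ⋃ σ ∈ Q, strictSortedBy σ := by
  classical
  refine ⟨{σ | ∃ ω ∈ E, V ω ∈ strictSortedBy σ}.toFinset, Subset.antisymm ?_ ?_⟩
  · rintro ω ⟨hωE, hinj⟩
    obtain ⟨σ, hσ⟩ := mem_iUnion.1 (iUnion_strictSortedBy.symm.subset hinj)
    exact mem_biUnion (by simpa using ⟨ω, hωE, hσ⟩) hσ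
  · intro ω hω
    obtain ⟨σ, hσQ, hσ⟩ := mem_iUnion₂.1 hω
    obtain ⟨ω', hω'E, hω'σ⟩ := by simpa using hσQ
    exact ⟨(hrank ω ω' (lt_iff_lt_of_mem_strictSortedBy hσ hω'σ)).2 hω'E,
      injective_of_mem_strictSortedBy hσ⟩

end RankClasses

section ProductMeasure

variable {ι α : Type*} [Fintype ι] [MeasurableSpace α]

lemma measurePreserving_comp_perm (μ : Measure α) [SigmaFinite μ] (ρ : Equiv.Perm ι) :
    MeasurePreserving (fun v : ι → α => v ∘ ρ) (Measure.pi fun _ => μ)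
      (Measure.pi fun _ => μ) := by
  convert measurePreserving_piCongrLeft (fun _ : ι => μ) ρ.symm
  ext v
  simp [MeasurableEquiv.piCongrLeft, Equiv.piCongrLeft]

lemma ae_injective_pi [MeasurableEq α] (μ : Measure α) [IsProbabilityMeasure μ]
    [NullSingletonClass μ] : ∀ᵐ v ∂(Measure.pi fun _ : ι => μ), Injective v := by
  simp only [Injective, ae_all_iff]
  intro j j'
  rcases eq_or_ne j j' with rfl | hjj'
  · exact ae_of_all _ fun _ _ => rfl
  have hpair : (Measure.pi fun _ : ι => μ).map (fun v => (v j, v j')) = μ.prod μ := by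
    have hind := (iIndepFun_pi (μ := fun _ : ι => μ) (X := fun _ x => x)
      fun _ => aemeasurable_id).indepFun hjj'
    rw [(indepFun_iff_map_prod_eq_prod_map_map (measurable_pi_apply j).aemeasurable
      (measurable_pi_apply j').aemeasurable).1 hind, (measurePreserving_eval _ j).map_eq,
      (measurePreserving_eval _ j').map_eq]
  have hdiag : (μ.prod μ) (diagonal α) = 0 := by
    rw [Measure.measure_prod_null measurableSet_diagonal]
    filter_upwards with x
    simp [diagonal]
  rw [← hpair, Measure.map_apply (by fun_prop) measurableSet_diagonal] at hdiag
  exact ae_iff.2 (measure_mono_null (fun v hv => (Classical.not_imp.1 hv).1) hdiag)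

end ProductMeasure

section InvariantMeasure

variable {α : Type*} [LinearOrder α] [TopologicalSpace α] [OrderClosedTopology α]
  [SecondCountableTopology α] [MeasurableSpace α] [OpensMeasurableSpace α] {m : ℕ}
  {ν : Measure (Fin m → α)} {S : Set (Fin m → α)}

lemma measurableSet_strictSortedBy (σ : Equiv.Perm (Fin m)) :
    MeasurableSet (strictSortedBy σ : Set (Fin m → α)) := by
  simp only [strictSortedBy, StrictMono, ofPred_forall]
  exact .iInter fun a => .iInter fun b => .iInter fun _ =>
    measurableSet_lt (measurable_pi_apply _) (measurable_pi_apply _)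

lemma measure_strictSortedBy_inter_eq
    (hν : ∀ ρ : Equiv.Perm (Fin m), MeasurePreserving (fun v => v ∘ ρ) ν ν)
    (hS : MeasurableSet S) (hSinv : ∀ ρ : Equiv.Perm (Fin m), (fun v => v ∘ ρ) ⁻¹' S = S)
    (σ : Equiv.Perm (Fin m)) :
    ν (strictSortedBy σ ∩ S) = ν (strictSortedBy 1 ∩ S) := by
  rw [← (hν σ).measure_preimage ((measurableSet_strictSortedBy 1).inter hS).nullMeasurableSet,
    preimage_inter, preimage_comp_strictSortedBy, mul_one, hSinv]

lemma measure_biUnion_strictSortedBy_inter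
    (hν : ∀ ρ : Equiv.Perm (Fin m), MeasurePreserving (fun v => v ∘ ρ) ν ν)
    (hS : MeasurableSet S) (hSinv : ∀ ρ : Equiv.Perm (Fin m), (fun v => v ∘ ρ) ⁻¹' S = S)
    (Q : Finset (Equiv.Perm (Fin m))) :
    ν ((⋃ σ ∈ Q, strictSortedBy σ) ∩ S) = Q.card * ν (strictSortedBy 1 ∩ S) := by
  rw [iUnion₂_inter, measure_biUnion_finset
      (fun σ _ τ _ hστ => (pairwise_disjoint_strictSortedBy hστ).mono inter_subset_left
        inter_subset_left)
      fun σ _ => (measurableSet_strictSortedBy σ).inter hS,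
    Finset.sum_congr rfl fun σ _ => measure_strictSortedBy_inter_eq hν hS hSinv σ,
    Finset.sum_const, nsmul_eq_mul]

lemma measure_biUnion_strictSortedBy_inter_mul_measure_univ
    (hν : ∀ ρ : Equiv.Perm (Fin m), MeasurePreserving (fun v => v ∘ ρ) ν ν)
    (hinj : ∀ᵐ v ∂ν, Injective v)
    (hS : MeasurableSet S) (hSinv : ∀ ρ : Equiv.Perm (Fin m), (fun v => v ∘ ρ) ⁻¹' S = S)
    (Q : Finset (Equiv.Perm (Fin m))) :
    ν ((⋃ σ ∈ Q, strictSortedBy σ) ∩ S) * ν univ = ν (⋃ σ ∈ Q, strictSortedBy σ) * ν S := by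
  have hcover : (⋃ σ ∈ Finset.univ, strictSortedBy σ) =ᵐ[ν] (univ : Set (Fin m → α)) := by
    simpa [iUnion_strictSortedBy] using Filter.eventuallyEq_univ.2 hinj
  have hfull (T : Set (Fin m → α)) : ν T = ν ((⋃ σ ∈ Finset.univ, strictSortedBy σ) ∩ T) := by
    simpa using (measure_congr (hcover.inter (ae_eq_refl T))).symm
  have hQ := measure_biUnion_strictSortedBy_inter hν MeasurableSet.univ (fun _ => preimage_univ)
  simp only [inter_univ] at hQ
  rw [hfull S, hfull univ, inter_univ, hQ, hQ, measure_biUnion_strictSortedBy_inter hν hS hSinv,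
    measure_biUnion_strictSortedBy_inter hν hS hSinv]
  ring

end InvariantMeasure

theorem fresh_samples_lemma_general
    {Ω : Type*} [MeasurableSpace Ω] (P : Measure Ω)
    (m : ℕ) (μ : Measure ℝ) [IsProbabilityMeasure μ] [NullSingletonClass μ]
    (V : Ω → Fin m → ℝ) (hV : Measurable V)
    (hlaw : Measure.map V P = Measure.pi fun _ : Fin m => μ)
    (E : Set Ω)
    -- `E` depends only on the relative ranks of the coordinates of `V`
    (hrank : ∀ ω ω' : Ω,
      (∀ j j' : Fin m, V ω j < V ω j' ↔ V ω' j < V ω' j') → (ω ∈ E ↔ ω' ∈ E)) :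
    ∀ S : Set (Fin m → ℝ), MeasurableSet S →
      (∀ σ : Equiv.Perm (Fin m), (fun v : Fin m → ℝ => v ∘ σ) ⁻¹' S = S) →
      P (E ∩ V ⁻¹' S) = P E * P (V ⁻¹' S) := by
  intro S hS hSinv
  have hlaw_apply {B : Set (Fin m → ℝ)} (hB : MeasurableSet B) :
      P (V ⁻¹' B) = (Measure.pi fun _ : Fin m => μ) B := by
    rw [← hlaw, Measure.map_apply hV hB]
  obtain ⟨Q, hEQ⟩ := exists_inter_injective_eq_preimage_biUnion_strictSortedBy V E hrank
  have hE_ae : E =ᵐ[P] V ⁻¹' ⋃ σ ∈ Q, strictSortedBy σ := by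
    have hinj : ∀ᵐ ω ∂P, Injective (V ω) :=
      ae_of_ae_map hV.aemeasurable (hlaw ▸ ae_injective_pi μ)
    exact hEQ ▸ (inter_ae_eq_left_of_ae_eq_univ (Filter.eventuallyEq_univ.2 hinj)).symm
  have hA : MeasurableSet (⋃ σ ∈ Q, strictSortedBy σ : Set (Fin m → ℝ)) :=
    Finset.measurableSet_biUnion Q fun σ _ => measurableSet_strictSortedBy σ
  rw [measure_congr (hE_ae.inter (ae_eq_refl (V ⁻¹' S))), measure_congr hE_ae, ← preimage_inter,
    hlaw_apply (hA.inter hS), hlaw_apply hA, hlaw_apply hS]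
  simpa using measure_biUnion_strictSortedBy_inter_mul_measure_univ (measurePreserving_comp_perm μ)
    (ae_injective_pi μ) hS hSinv Q

/-- Fresh-samples lemma. Let `V : Ω → (Fin m → ℝ)` be a vector of `m = k + i - 1` (here
written `m`) i.i.d. draws from an atomless distribution `μ` (the samples `S₁,…,S_k` together
with `X₁,…,X_{i-1}`, and `X_i` may be included as the last coordinate). If the event `E`
("the MRS algorithm reaches step `i` / decides based on step `i`") depends only on the
relative ranks of the coordinates of `V`, then conditioned on `E` the (unordered) collection
of values is distributed as fresh i.i.d. samples: `E` is independent of every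
permutation-invariant (symmetric) measurable set of value vectors. -/
theorem fresh_samples_lemma
    {Ω : Type*} [MeasurableSpace Ω] (P : Measure Ω) [IsProbabilityMeasure P]
    (m : ℕ) (μ : Measure ℝ) [IsProbabilityMeasure μ] [NullSingletonClass μ]
    (V : Ω → Fin m → ℝ) (hV : Measurable V)
    (hlaw : Measure.map V P = Measure.pi fun _ : Fin m => μ)
    (E : Set Ω) (hE : MeasurableSet E)
    -- `E` depends only on the relative ranks of the coordinates of `V`
    (hrank : ∀ ω ω' : Ω,
      (∀ j j' : Fin m, V ω j < V ω j' ↔ V ω' j < V ω' j') → (ω ∈ E ↔ ω' ∈ E)) :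
    ∀ S : Set (Fin m → ℝ), MeasurableSet S →
      (∀ σ : Equiv.Perm (Fin m), (fun v : Fin m → ℝ => v ∘ σ) ⁻¹' S = S) →
      P (E ∩ V ⁻¹' S) = P E * P (V ⁻¹' S) :=
  fresh_samples_lemma_general P m μ V hV hlaw E hrank
end

section
/- Fix integers N ≥ 1 and 1 ≤ q ≤ N. For a fixed 0/1-vector z of length N with exactly q ones, with ones at positions e₁ < … < e_q and zeros at positions n₁ < … < n_{N-q}, the product ∏_{ℓ=1}^{q} (q-ℓ+1)/(N - e_ℓ + 1) · ∏_{ℓ=1}^{N-q} (N - q - ℓ + 1)/(N - n_ℓ + 1) equals 1/C(N, q). -/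
/-!
The numerators multiply to `q! (N-q)!`. Since the positions `e ℓ` and `nn ℓ` together list each
`x ∈ [1, N]` exactly once, the denominators multiply to `∏_{x=1}^{N} (N-x+1) = N!`.
-/

open Finset
open scoped Nat

theorem Fin.prod_univ_sub_val_eq_factorial (n : ℕ) : ∏ ℓ : Fin n, (n - ℓ.val) = n ! := by
  rw [Fin.prod_univ_eq_prod_range (n - ·), ← Nat.descFactorial_eq_prod_range,
    Nat.descFactorial_self]

theorem prod_Icc_one_sub_add_one_eq_factorial (n : ℕ) : ∏ x ∈ Icc 1 n, (n - x + 1) = n ! := by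
  rw [← Ico_add_one_right_eq_Icc, prod_Ico_eq_prod_range, ← Nat.descFactorial_self,
    Nat.descFactorial_eq_prod_range]
  exact prod_congr (by simp) fun k hk => by rw [mem_range] at hk; omega

theorem prod_comp_mul_prod_comp_eq_prod_of_partition {ι κ α M : Type*} [Fintype ι] [Fintype κ]
    [DecidableEq α] [CommMonoid M] {e : ι → α} {g : κ → α} (he : e.Injective) (hg : g.Injective)
    {s : Finset α} (hunion : Set.range e ∪ Set.range g = s)
    (hdisj : Disjoint (Set.range e) (Set.range g)) (f : α → M) :
    (∏ i, f (e i)) * ∏ j, f (g j) = ∏ x ∈ s, f x := by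
  have himage_union : univ.image e ∪ univ.image g = s := by
    apply coe_injective; push_cast; simpa [Set.image_univ] using hunion
  have himage_disj : Disjoint (univ.image e) (univ.image g) := by
    rw [← disjoint_coe]; push_cast; simpa [Set.image_univ] using hdisj
  rw [← himage_union, prod_union himage_disj, prod_image he.injOn, prod_image hg.injOn]

theorem product_identity_general (N q : ℕ) (hqN : q ≤ N)
    (e : Fin q → ℕ) (nn : Fin (N - q) → ℕ)
    (he : StrictMono e) (hn : StrictMono nn)
    (hrange : Set.range e ∪ Set.range nn = Set.Icc 1 N)
    (hdisj : Disjoint (Set.range e) (Set.range nn)) :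
    (∏ ℓ : Fin q, ((q - ℓ.val : ℕ) : ℝ) / ((N - e ℓ + 1 : ℕ) : ℝ)) *
      (∏ ℓ : Fin (N - q), ((N - q - ℓ.val : ℕ) : ℝ) / ((N - nn ℓ + 1 : ℕ) : ℝ))
      = 1 / (N.choose q : ℝ) := by
  have hden : (∏ ℓ, (N - e ℓ + 1)) * ∏ ℓ, (N - nn ℓ + 1) = N ! := by
    rw [prod_comp_mul_prod_comp_eq_prod_of_partition he.injective hn.injective
      (by rw [hrange, coe_Icc]) hdisj (fun x => N - x + 1), prod_Icc_one_sub_add_one_eq_factorial]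
  rw [prod_div_distrib, prod_div_distrib, _root_.div_mul_div_comm, ← Nat.cast_prod,
    ← Nat.cast_prod, ← Nat.cast_prod, ← Nat.cast_prod, Fin.prod_univ_sub_val_eq_factorial,
    Fin.prod_univ_sub_val_eq_factorial, ← Nat.cast_mul, ← Nat.cast_mul, hden,
    Nat.cast_choose ℝ hqN, one_div_div]
  norm_cast

/-- Product identity for the streaming subset-sampling process. Positions `1,…,N` are split
into the positions `e₁ < … < e_q` of the ones and `n₁ < … < n_{N-q}` of the zeros of a fixed
bit vector with exactly `q` ones. Then
`∏_{ℓ=1}^{q} (q-ℓ+1)/(N-e_ℓ+1) · ∏_{ℓ=1}^{N-q} (N-q-ℓ+1)/(N-n_ℓ+1) = 1 / C(N,q)`. -/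
theorem product_identity (N q : ℕ) (hN : 1 ≤ N) (hq : 1 ≤ q) (hqN : q ≤ N)
    (e : Fin q → ℕ) (nn : Fin (N - q) → ℕ)
    (he : StrictMono e) (hn : StrictMono nn)
    (hrange : Set.range e ∪ Set.range nn = Set.Icc 1 N)
    (hdisj : Disjoint (Set.range e) (Set.range nn)) :
    (∏ ℓ : Fin q, ((q - ℓ.val : ℕ) : ℝ) / ((N - e ℓ + 1 : ℕ) : ℝ)) *
      (∏ ℓ : Fin (N - q), ((N - q - ℓ.val : ℕ) : ℝ) / ((N - nn ℓ + 1 : ℕ) : ℝ))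
      = 1 / (N.choose q : ℝ) :=
  product_identity_general N q hqN e nn he hn hrange hdisj
end

section
/- Suppose g: [0,1] → ℝ₊ is measurable with g bounded away from 0, and for all a ∈ [0,1], ∫₀¹ exp(-∫₀^y 1/g(z) dz) · (1/g(y)) · (1 - a^{g(y)}) dy ≥ α(1-a). Then for every distribution function F on ℝ₊ and every n, ∫₀^∞ ∫₀¹ exp(-∫₀^y 1/g(z) dz) · (1/g(y)) · (1 - F(x)^{g(y)·n}) dy dx ≥ α ∫₀^∞ (1 - F(x)^n) dx; conversely, if the pointwise condition fails for some a ∈ [0,1), then the integrated inequality fails for the two-point distribution taking value 0 with probability a^{1/n} and value 1 otherwise. -/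
/-!
Put `a = F(x)^n`: since `F(x)^(g(y) n) = a^(g(y))`, the inner integral of the algorithm is
`MRS.tail g a`, and `MRS.tail g` is nonnegative, antitone on `[0,1]`, vanishes at `1` and is
bounded by a multiple of `1 - a`. Sufficiency is then the pointwise inequality integrated over
`x > 0` (the bound gives integrability, and without integrability the right-hand side is `0`).
For necessity, the two-point distribution has `F(x)^n = a` on `[0,1)` and `1` beyond, so the two
sides of the integrated inequality are exactly `MRS.tail g a` and `α (1 - a)`.
-/

open Real MeasureTheory intervalIntegral Set

theorem one_sub_rpow_le_max_mul {a t : ℝ} (ha : a ∈ Icc (0 : ℝ) 1) (ht : 0 ≤ t) :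
    1 - a ^ t ≤ max 1 t * (1 - a) := by
  rcases le_total 1 t with h1t | ht1
  · have bernoulli : 1 + t * (a - 1) ≤ a ^ t := by
      simpa using one_add_mul_self_le_rpow_one_add (s := a - 1) (by linarith [ha.1]) h1t
    rw [max_eq_right h1t]
    linarith
  · have : a ≤ a ^ t := by
      simpa using rpow_le_rpow_of_exponent_ge' ha.1 ha.2 ht ht1
    rw [max_eq_left ht1]
    linarith

theorem mul_integral_le_integral_of_le {X : Type*} [MeasurableSpace X] {μ : Measure X}
    {u v : X → ℝ} {α K : ℝ} (hv : AEStronglyMeasurable v μ) (hv0 : ∀ x, 0 ≤ v x)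
    (hvK : ∀ x, v x ≤ K * u x) (hαv : ∀ x, α * u x ≤ v x) :
    α * ∫ x, u x ∂μ ≤ ∫ x, v x ∂μ := by
  by_cases hu : Integrable u μ
  · have hvint : Integrable v μ :=
      (hu.const_mul K).mono' hv (ae_of_all _ fun x => by
        rw [norm_of_nonneg (hv0 x)]; exact hvK x)
    rw [← MeasureTheory.integral_const_mul]
    exact integral_mono (hu.const_mul α) hvint hαv
  · rw [integral_undef hu, mul_zero]
    exact integral_nonneg hv0

theorem integral_Ioi_zero_step {φ : ℝ → ℝ} (hφ : φ 1 = 0) (a : ℝ) :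
    ∫ x in Ioi (0 : ℝ), φ (if x < 1 then a else 1) = φ a := by
  have hstep : (fun x : ℝ => φ (if x < 1 then a else 1)) = (Iio 1).indicator fun _ => φ a := by
    ext x
    by_cases h : x < 1 <;> simp [h, hφ]
  rw [hstep, setIntegral_indicator measurableSet_Iio, Ioi_inter_Iio, setIntegral_const]
  simp

namespace MRS

noncomputable def weight (g : ℝ → ℝ) (y : ℝ) : ℝ :=
  exp (-(∫ z in (0 : ℝ)..y, 1 / g z)) * (1 / g y)

noncomputable def tail (g : ℝ → ℝ) (a : ℝ) : ℝ :=
  ∫ y in (0 : ℝ)..1, weight g y * (1 - a ^ g y)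

variable {g : ℝ → ℝ} {c : ℝ}

theorem weight_nonneg {y : ℝ} (hgy : 0 ≤ g y) : 0 ≤ weight g y := by
  unfold weight
  positivity

theorem weight_le_inv (hg : ∀ y ∈ Icc (0 : ℝ) 1, 0 ≤ g y) {y : ℝ} (hy : y ∈ Icc (0 : ℝ) 1) :
    weight g y ≤ 1 / g y := by
  have hprim : 0 ≤ ∫ z in (0 : ℝ)..y, 1 / g z :=
    integral_nonneg hy.1 fun z hz => one_div_nonneg.2 (hg z ⟨hz.1, hz.2.trans hy.2⟩)
  have hexp : exp (-(∫ z in (0 : ℝ)..y, 1 / g z)) ≤ 1 := exp_le_one_iff.2 (neg_nonpos.2 hprim)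
  exact mul_le_of_le_one_left (one_div_nonneg.2 (hg y hy)) hexp

theorem tail_integrand_nonneg (hg : ∀ y ∈ Icc (0 : ℝ) 1, 0 ≤ g y) {a : ℝ}
    (ha : a ∈ Icc (0 : ℝ) 1) {y : ℝ} (hy : y ∈ Icc (0 : ℝ) 1) :
    0 ≤ weight g y * (1 - a ^ g y) :=
  mul_nonneg (weight_nonneg (hg y hy)) (sub_nonneg.2 (rpow_le_one ha.1 ha.2 (hg y hy)))

theorem tail_integrand_le (hc : 0 < c) (hgc : ∀ y ∈ Icc (0 : ℝ) 1, c ≤ g y) {a : ℝ}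
    (ha : a ∈ Icc (0 : ℝ) 1) {y : ℝ} (hy : y ∈ Icc (0 : ℝ) 1) :
    weight g y * (1 - a ^ g y) ≤ max 1 c⁻¹ * (1 - a) := by
  have hg : ∀ y ∈ Icc (0 : ℝ) 1, 0 ≤ g y := fun y hy => hc.le.trans (hgc y hy)
  have hgy : 0 < g y := hc.trans_le (hgc y hy)
  have h1a : 0 ≤ 1 - a := sub_nonneg.2 ha.2
  calc weight g y * (1 - a ^ g y)
      ≤ 1 / g y * (max 1 (g y) * (1 - a)) :=
        mul_le_mul (weight_le_inv hg hy) (one_sub_rpow_le_max_mul ha hgy.le)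
          (sub_nonneg.2 (rpow_le_one ha.1 ha.2 hgy.le)) (by positivity)
    _ = max (g y)⁻¹ 1 * (1 - a) := by
        rw [← mul_assoc, one_div, mul_max_of_nonneg _ _ (inv_nonneg.2 hgy.le), mul_one,
          inv_mul_cancel₀ hgy.ne']
    _ ≤ max 1 c⁻¹ * (1 - a) := by
        rw [max_comm]
        gcongr
        exact hgc y hy

theorem intervalIntegrable_tail_integrand (hmeas : Measurable g) (hc : 0 < c)
    (hgc : ∀ y ∈ Icc (0 : ℝ) 1, c ≤ g y) {a : ℝ} (ha : a ∈ Icc (0 : ℝ) 1) :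
    IntervalIntegrable (fun y => weight g y * (1 - a ^ g y)) volume 0 1 := by
  have hg : ∀ y ∈ Icc (0 : ℝ) 1, 0 ≤ g y := fun y hy => hc.le.trans (hgc y hy)
  have hinv : IntegrableOn (fun z => 1 / g z) (uIcc 0 1) := by
    rw [uIcc_of_le zero_le_one]
    refine Measure.integrableOn_of_bounded (M := c⁻¹) measure_Icc_lt_top.ne
      (measurable_const.div hmeas).aestronglyMeasurable
      ((ae_restrict_iff' measurableSet_Icc).2 (ae_of_all _ fun y hy => ?_))
    rw [norm_of_nonneg (one_div_nonneg.2 (hg y hy)), one_div]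
    exact inv_anti₀ hc (hgc y hy)
  have hprim : ContinuousOn (fun y => ∫ z in (0 : ℝ)..y, 1 / g z) (uIcc 0 1) :=
    continuousOn_primitive_interval hinv
  have hweight : AEStronglyMeasurable (weight g) (volume.restrict (uIoc 0 1)) :=
    ((continuous_exp.comp_continuousOn hprim.neg).aestronglyMeasurable measurableSet_uIcc
      |>.mono_set uIoc_subset_uIcc).mul (measurable_const.div hmeas).aestronglyMeasurable
  refine intervalIntegrable_const (c := max 1 c⁻¹ * (1 - a)) |>.mono_fun'
    (hweight.mul (measurable_const.sub (measurable_const.pow hmeas)).aestronglyMeasurable)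
    ((ae_restrict_iff' measurableSet_uIoc).2 (ae_of_all _ fun y hy => ?_))
  rw [uIoc_of_le zero_le_one] at hy
  have hy' : y ∈ Icc (0 : ℝ) 1 := Ioc_subset_Icc_self hy
  dsimp only
  rw [norm_of_nonneg (tail_integrand_nonneg hg ha hy')]
  exact tail_integrand_le hc hgc ha hy'

theorem tail_nonneg (hg : ∀ y ∈ Icc (0 : ℝ) 1, 0 ≤ g y) {a : ℝ} (ha : a ∈ Icc (0 : ℝ) 1) :
    0 ≤ tail g a :=
  integral_nonneg zero_le_one fun _ hy => tail_integrand_nonneg hg ha hy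

theorem tail_le (hmeas : Measurable g) (hc : 0 < c) (hgc : ∀ y ∈ Icc (0 : ℝ) 1, c ≤ g y)
    {a : ℝ} (ha : a ∈ Icc (0 : ℝ) 1) : tail g a ≤ max 1 c⁻¹ * (1 - a) := by
  simpa [tail] using integral_mono_on zero_le_one
    (intervalIntegrable_tail_integrand hmeas hc hgc ha) intervalIntegrable_const
    fun _ hy => tail_integrand_le hc hgc ha hy

theorem tail_antitoneOn (hmeas : Measurable g) (hc : 0 < c)
    (hgc : ∀ y ∈ Icc (0 : ℝ) 1, c ≤ g y) : AntitoneOn (tail g) (Icc 0 1) := by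
  intro a ha b hb hab
  refine integral_mono_on zero_le_one (intervalIntegrable_tail_integrand hmeas hc hgc hb)
    (intervalIntegrable_tail_integrand hmeas hc hgc ha) fun y hy => ?_
  have hgy : 0 ≤ g y := hc.le.trans (hgc y hy)
  exact mul_le_mul_of_nonneg_left (sub_le_sub_left (rpow_le_rpow ha.1 hab hgy) 1)
    (weight_nonneg hgy)

theorem tail_one : tail g 1 = 0 := by
  simp [tail]

theorem tail_rpow {b : ℝ} (hb : 0 ≤ b) (s : ℝ) :
    tail g (b ^ s) = ∫ y in (0 : ℝ)..1,
      exp (-(∫ z in (0 : ℝ)..y, 1 / g z)) * (1 / g y) * (1 - b ^ (g y * s)) := by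
  refine integral_congr fun y _ => ?_
  simp only [weight, mul_comm (g y) s, rpow_mul hb]

end MRS

/-- The pointwise inequality (with `a = F(x)^n`) is sufficient and necessary for the MRS
algorithm defined by `g` to achieve approximation ratio `α`. -/
theorem pointwise_iff_integrated (g : ℝ → ℝ) (α : ℝ)
    (hmeas : Measurable g) (c : ℝ) (hc : 0 < c) (hgc : ∀ y ∈ Set.Icc (0:ℝ) 1, c ≤ g y) :
    -- sufficiency
    ((∀ a ∈ Set.Icc (0:ℝ) 1,
        (∫ y in (0:ℝ)..1,
            exp (-(∫ z in (0:ℝ)..y, 1 / g z)) * (1 / g y) * (1 - a ^ (g y)))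
          ≥ α * (1 - a)) →
      ∀ F : ℝ → ℝ, Monotone F → (∀ x, 0 ≤ F x) → (∀ x, F x ≤ 1) →
        ∀ n : ℕ, 1 ≤ n →
          (∫ x in Set.Ioi (0:ℝ),
              ∫ y in (0:ℝ)..1,
                exp (-(∫ z in (0:ℝ)..y, 1 / g z)) * (1 / g y)
                  * (1 - (F x) ^ (g y * n)))
            ≥ α * ∫ x in Set.Ioi (0:ℝ), (1 - (F x) ^ (n : ℝ))) ∧
    -- necessity: if the pointwise condition fails at some `a ∈ [0,1)`, the integrated
    -- inequality fails for the two-point distribution with mass `a^{1/n}` at 0 and the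
    -- rest at 1.
    (∀ a ∈ Set.Ico (0:ℝ) 1,
      (∫ y in (0:ℝ)..1,
          exp (-(∫ z in (0:ℝ)..y, 1 / g z)) * (1 / g y) * (1 - a ^ (g y)))
        < α * (1 - a) →
      ∀ n : ℕ, 1 ≤ n →
        ∀ F : ℝ → ℝ, (∀ x, F x = if x < 1 then a ^ ((1:ℝ) / n) else 1) →
          (∫ x in Set.Ioi (0:ℝ),
              ∫ y in (0:ℝ)..1,
                exp (-(∫ z in (0:ℝ)..y, 1 / g z)) * (1 / g y)
                  * (1 - (F x) ^ (g y * n)))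
            < α * ∫ x in Set.Ioi (0:ℝ), (1 - (F x) ^ (n : ℝ))) := by
  have hg : ∀ y ∈ Icc (0 : ℝ) 1, 0 ≤ g y := fun y hy => hc.le.trans (hgc y hy)
  refine ⟨fun hpt F hF hF0 hF1 n _ => ?_, fun a ha hlt n hn F hF => ?_⟩
  · have hFn : ∀ x, F x ^ (n : ℝ) ∈ Icc (0 : ℝ) 1 := fun x =>
      ⟨rpow_nonneg (hF0 x) _, rpow_le_one (hF0 x) (hF1 x) n.cast_nonneg⟩
    have hanti : Antitone fun x => MRS.tail g (F x ^ (n : ℝ)) := fun x x' hxx' =>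
      MRS.tail_antitoneOn hmeas hc hgc (hFn x) (hFn x')
        (rpow_le_rpow (hF0 x) (hF hxx') n.cast_nonneg)
    simp only [← MRS.tail_rpow (hF0 _)]
    exact mul_integral_le_integral_of_le hanti.measurable.aestronglyMeasurable
      (fun x => MRS.tail_nonneg hg (hFn x)) (fun x => MRS.tail_le hmeas hc hgc (hFn x))
      (fun x => hpt _ (hFn x))
  · have hFn : ∀ x, F x ^ (n : ℝ) = if x < 1 then a else 1 := fun x => by
      rw [hF x]
      split_ifs
      · rw [← rpow_mul ha.1, one_div_mul_cancel (Nat.cast_ne_zero.2 (by omega)), rpow_one]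
      · exact one_rpow _
    have hF0 : ∀ x, 0 ≤ F x := fun x => by
      rw [hF x]; split_ifs
      exacts [rpow_nonneg ha.1 _, zero_le_one]
    simp only [← MRS.tail_rpow (hF0 _), hFn]
    rw [integral_Ioi_zero_step MRS.tail_one,
      integral_Ioi_zero_step (φ := fun b => 1 - b) (sub_self 1)]
    exact hlt
end

section
/- Let A be a finite set, B a compact metric space, and g: A × B → ℝ such that b ↦ g(a,b) is continuous for each a ∈ A. Extend g bilinearly to probability measures. Then max over mixed strategies x ∈ P(A) of min over b ∈ B of g(x,b) equals min over y ∈ P(B) of max over a ∈ A of g(a,y); moreover if this value is negative, there is a finitely supported y ∈ P(B) with max_{a∈A} g(a,y) ≤ 0. -/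
/-!
Weak duality (max-min ≤ min-max) is integration of the pure payoffs. For the converse, use a
theorem of alternatives for the convex hull `H` of the payoff vectors `(g a b)_a`, `b ∈ B`, and a
level `c`: either some point of `H` lies below `c` in every coordinate, and, being a finite
convex combination, it is the payoff vector of a finitely supported mixed strategy on `B`; or
Hahn–Banach separates `H` from the open orthant below `c`, and the normalized separating
functional is a mixed strategy on `A` guaranteeing `c` against every `b`. The level `c` equal to
the min-max value gives equality, and the level `c = 0` gives the finitely supported strategy.
-/

open MeasureTheory Set Filter Topology

section Separation

variable {ι : Type*} [Fintype ι]

lemma nonneg_and_mul_sum_le_of_sum_mul_lt {x : ι → ℝ} {c u : ℝ}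
    (h : ∀ z : ι → ℝ, (∀ i, z i < c) → ∑ i, z i * x i < u) :
    (∀ i, 0 ≤ x i) ∧ c * ∑ i, x i ≤ u := by
  classical
  have hlow : ∑ i, (c - 1) * x i < u := h _ fun _ => by linarith
  refine ⟨fun i => ?_, ?_⟩
  · by_contra! hi
    -- lowering coordinate `i` by `t` raises the sum to exactly `u`
    set t := (∑ j, (c - 1) * x j - u) / x i
    have ht : 0 < t := div_pos_of_neg_of_neg (by linarith) hi
    have hsum : ∑ j, (c - 1 - t * (Pi.single i 1 : ι → ℝ) j) * x j = u := by
      simp [sub_mul, Finset.sum_sub_distrib, Pi.single_apply, t, hi.ne]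
    refine (h _ fun j => ?_).ne hsum
    rcases eq_or_ne j i with rfl | hj
    · simp only [Pi.single_eq_same]; linarith
    · simp only [Pi.single_eq_of_ne hj]; linarith
  · have hlim : Tendsto (fun d => ∑ i, d * x i) (𝓝[<] c) (𝓝 (c * ∑ i, x i)) := by
      simp_rw [← Finset.mul_sum]
      exact ((continuous_mul_const _).tendsto c).mono_left nhdsWithin_le_nhds
    exact le_of_tendsto hlim (eventually_nhdsWithin_of_forall fun d hd => (h _ fun _ => hd).le)

lemma Convex.exists_mem_stdSimplex_le_sum_mul {S : Set (ι → ℝ)} (hS : Convex ℝ S)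
    (hSne : S.Nonempty) {c : ℝ} (hc : ∀ z ∈ S, ∃ i, c ≤ z i) :
    ∃ x ∈ stdSimplex ℝ ι, ∀ z ∈ S, c ≤ ∑ i, x i * z i := by
  classical
  have hdisj : Disjoint (univ.pi fun _ => Iio c) S := by
    refine disjoint_left.2 fun z hzD hzS => ?_
    obtain ⟨i, hi⟩ := hc z hzS
    exact (hzD i (mem_univ i)).not_ge hi
  obtain ⟨f, u, hfD, hfS⟩ := geometric_hahn_banach_open (convex_pi fun _ _ => convex_Iio c)
    (isOpen_set_pi finite_univ fun _ _ => isOpen_Iio) hS hdisj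
  set x : ι → ℝ := fun i => f fun j => if i = j then 1 else 0
  have hf : ∀ z, f z = ∑ i, z i * x i := fun z =>
    LinearMap.pi_apply_eq_sum_univ (f : (ι → ℝ) →ₗ[ℝ] ℝ) z
  obtain ⟨hx0, hxc⟩ := nonneg_and_mul_sum_le_of_sum_mul_lt fun z hz =>
    hf z ▸ hfD z fun i _ => hz i
  obtain ⟨z₀, hz₀⟩ := hSne
  have hT : 0 < ∑ i, x i := by
    refine (Finset.sum_nonneg fun i _ => hx0 i).lt_of_ne fun hT => ?_
    have hx : ∀ i, x i = 0 := fun i =>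
      (Finset.sum_eq_zero_iff_of_nonneg fun i _ => hx0 i).1 hT.symm i (Finset.mem_univ i)
    have hpos : 0 < u := by simpa [hf, hx] using hfD (fun _ => c - 1) fun _ _ => by simp
    have hnonpos : u ≤ 0 := by simpa [hf, hx] using hfS z₀ hz₀
    linarith
  refine ⟨fun i => x i / ∑ j, x j,
    ⟨fun i => div_nonneg (hx0 i) hT.le, by rw [← Finset.sum_div, div_self hT.ne']⟩,
    fun z hz => ?_⟩
  have hzx : ∑ i, x i / (∑ j, x j) * z i = (∑ i, z i * x i) / ∑ j, x j := by
    rw [Finset.sum_div]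
    exact Finset.sum_congr rfl fun i _ => by ring
  rw [hzx, le_div_iff₀ hT]
  exact hxc.trans (hf z ▸ hfS z hz)

end Separation

lemma exists_sum_smul_eq_of_mem_convexHull_range {ι E : Type*} [AddCommGroup E] [Module ℝ E]
    {v : ι → E} {z : E} (hz : z ∈ convexHull ℝ (range v)) :
    ∃ (s : Finset ι) (w : ι → ℝ), (∀ i, 0 ≤ w i) ∧ ∑ i ∈ s, w i = 1 ∧
      ∑ i ∈ s, w i • v i = z := by
  rw [convexHull_range_eq_exists_affineCombination] at hz
  obtain ⟨s, w, hw0, hw1, rfl⟩ := hz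
  have hw : ∀ i ∈ s, (s : Set ι).indicator w i = w i := fun i hi => indicator_of_mem hi w
  refine ⟨s, (s : Set ι).indicator w, indicator_nonneg hw0, ?_, ?_⟩
  · rw [Finset.sum_congr rfl hw, hw1]
  · rw [s.affineCombination_eq_linear_combination v w hw1]
    exact Finset.sum_congr rfl fun i hi => by rw [hw i hi]

lemma exists_stdSimplex_le_or_exists_finset_sum_lt {A B : Type*} [Fintype A] [Nonempty B]
    (g : A → B → ℝ) (c : ℝ) :
    (∃ x ∈ stdSimplex ℝ A, ∀ b, c ≤ ∑ a, x a * g a b) ∨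
      ∃ (s : Finset B) (w : B → ℝ), (∀ b, 0 ≤ w b) ∧ ∑ b ∈ s, w b = 1 ∧
        ∀ a, ∑ b ∈ s, w b * g a b < c := by
  refine or_iff_not_imp_right.2 fun hlt => ?_
  push Not at hlt
  have hhull : ∀ z ∈ convexHull ℝ (range fun b a => g a b), ∃ a, c ≤ z a := by
    intro z hz
    obtain ⟨s, w, hw0, hw1, rfl⟩ := exists_sum_smul_eq_of_mem_convexHull_range hz
    obtain ⟨a, ha⟩ := hlt s w hw0 hw1
    exact ⟨a, by simpa [Finset.sum_apply] using ha⟩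
  obtain ⟨x, hx, hxc⟩ := (convex_convexHull ℝ _).exists_mem_stdSimplex_le_sum_mul
    ((range_nonempty _).mono (subset_convexHull ℝ _)) hhull
  exact ⟨x, hx, fun b => hxc _ (subset_convexHull ℝ _ (mem_range_self b))⟩

lemma exists_probabilityMeasure_integral_eq_sum {B : Type*} [MeasurableSpace B]
    [MeasurableSingletonClass B] (s : Finset B) {w : B → ℝ} (hw0 : ∀ b, 0 ≤ w b)
    (hw1 : ∑ b ∈ s, w b = 1) :
    ∃ y : ProbabilityMeasure B, ∀ f : B → ℝ,
      ∫ b, f b ∂(y : Measure B) = ∑ b ∈ s, w b * f b := by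
  set μ : Measure B := ∑ b ∈ s, ENNReal.ofReal (w b) • Measure.dirac b
  have hμ : IsProbabilityMeasure μ := ⟨by
    simp [μ, ← ENNReal.ofReal_sum_of_nonneg fun b _ => hw0 b, hw1]⟩
  refine ⟨⟨μ, hμ⟩, fun f => ?_⟩
  rw [ProbabilityMeasure.coe_mk, integral_finsetSum_measure fun b _ =>
    (integrable_dirac enorm_lt_top).smul_measure ENNReal.ofReal_ne_top]
  refine Finset.sum_congr rfl fun b _ => ?_
  rw [integral_smul_measure, integral_dirac, ENNReal.toReal_ofReal (hw0 b), smul_eq_mul]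

lemma iInf_sum_mul_le_iSup_integral {A B : Type*} [Fintype A] [MeasurableSpace B]
    {μ : Measure B} [IsProbabilityMeasure μ] {g : A → B → ℝ}
    (hg : ∀ a, Integrable (g a) μ) {x : A → ℝ} (hx : x ∈ stdSimplex ℝ A)
    (hbdd : BddBelow (range fun b => ∑ a, x a * g a b)) :
    ⨅ b, ∑ a, x a * g a b ≤ ⨆ a, ∫ b, g a b ∂μ :=
  calc ⨅ b, ∑ a, x a * g a b
      = ∫ _, ⨅ b, ∑ a, x a * g a b ∂μ := by simp
    _ ≤ ∫ b, ∑ a, x a * g a b ∂μ :=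
      integral_mono (integrable_const _) (integrable_finsetSum _ fun a _ => (hg a).const_mul _)
        fun b => ciInf_le hbdd b
    _ = ∑ a, x a * ∫ b, g a b ∂μ := by
      rw [integral_finsetSum _ fun a _ => (hg a).const_mul _]
      simp_rw [integral_const_mul]
    _ ≤ ∑ a, x a * ⨆ a, ∫ b, g a b ∂μ := Finset.sum_le_sum fun a _ =>
      mul_le_mul_of_nonneg_left
        (le_ciSup (f := fun a => ∫ b, g a b ∂μ) (finite_range _).bddAbove a) (hx.1 a)
    _ = ⨆ a, ∫ b, g a b ∂μ := by rw [← Finset.sum_mul, hx.2, one_mul]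

/-- Minimax theorem for a finite set `A` of pure strategies against a compact metric space
`B`, with payoff `g` continuous in the second argument: the max-min over mixed strategies
on `A` equals the min-max over mixed strategies on `B`; moreover, if this value is negative
there is a finitely supported mixed strategy `y` on `B` with `max_{a} g(a, y) ≤ 0`. -/
theorem minimax_finite_compact
    {A : Type*} [Fintype A] [Nonempty A]
    {B : Type*} [MetricSpace B] [CompactSpace B] [Nonempty B]
    [MeasurableSpace B] [BorelSpace B]
    (g : A → B → ℝ) (hg : ∀ a, Continuous (g a)) :
    (⨆ x : {x : A → ℝ // (∀ a, 0 ≤ x a) ∧ ∑ a, x a = 1},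
        ⨅ b : B, ∑ a, (x : A → ℝ) a * g a b)
      = (⨅ y : ProbabilityMeasure B, ⨆ a : A, ∫ b, g a b ∂(y : Measure B)) ∧
    ((⨅ y : ProbabilityMeasure B, ⨆ a : A, ∫ b, g a b ∂(y : Measure B)) < 0 →
      ∃ (s : Finset B) (w : B → ℝ), (∀ b, 0 ≤ w b) ∧ (∑ b ∈ s, w b) = 1 ∧
        ∀ a : A, (∑ b ∈ s, w b * g a b) ≤ 0) := by
  classical
  set M := ⨆ x : {x : A → ℝ // (∀ a, 0 ≤ x a) ∧ ∑ a, x a = 1},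
    ⨅ b : B, ∑ a, x.1 a * g a b
  set N := ⨅ y : ProbabilityMeasure B, ⨆ a : A, ∫ b, g a b ∂(y : Measure B)
  have hweak : ∀ x ∈ stdSimplex ℝ A, ∀ y : ProbabilityMeasure B,
      ⨅ b, ∑ a, x a * g a b ≤ ⨆ a, ∫ b, g a b ∂(y : Measure B) := fun x hx y =>
    iInf_sum_mul_le_iSup_integral
      (fun a => (hg a).integrable_of_hasCompactSupport (.of_compactSpace _)) hx
      (isCompact_range (by fun_prop)).bddBelow
  have hx₀ := single_mem_stdSimplex ℝ (Classical.arbitrary A)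
  have : Nonempty (ProbabilityMeasure B) :=
    ⟨⟨Measure.dirac (Classical.arbitrary B), inferInstance⟩⟩
  have : Nonempty {x : A → ℝ // (∀ a, 0 ≤ x a) ∧ ∑ a, x a = 1} := ⟨⟨_, hx₀⟩⟩
  have hMN : M ≤ N := ciSup_le fun x => le_ciInf fun y => hweak x x.2 y
  have hle_M : ∀ x : {x : A → ℝ // (∀ a, 0 ≤ x a) ∧ ∑ a, x a = 1},
      ⨅ b, ∑ a, x.1 a * g a b ≤ M :=
    le_ciSup ⟨_, forall_mem_range.2 fun x => hweak x x.2 (Classical.arbitrary _)⟩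
  have hN_le : ∀ (s : Finset B) (w : B → ℝ), (∀ b, 0 ≤ w b) → ∑ b ∈ s, w b = 1 →
      N ≤ ⨆ a, ∑ b ∈ s, w b * g a b := fun s w hw0 hw1 => by
    obtain ⟨y, hy⟩ := exists_probabilityMeasure_integral_eq_sum s hw0 hw1
    simpa only [hy] using ciInf_le ⟨_, forall_mem_range.2 (hweak _ hx₀)⟩ y
  have hNM : N ≤ M := by
    rcases exists_stdSimplex_le_or_exists_finset_sum_lt g N with
      ⟨x, hx, hxN⟩ | ⟨s, w, hw0, hw1, hlt⟩
    · exact (le_ciInf hxN).trans (hle_M ⟨x, hx⟩)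
    · obtain ⟨a, ha⟩ := exists_eq_ciSup_of_finite (f := fun a => ∑ b ∈ s, w b * g a b)
      exact absurd (hN_le s w hw0 hw1) (ha ▸ hlt a).not_ge
  refine ⟨hMN.antisymm hNM, fun hN => ?_⟩
  rcases exists_stdSimplex_le_or_exists_finset_sum_lt g 0 with
    ⟨x, hx, hx0⟩ | ⟨s, w, hw0, hw1, hlt⟩
  · exact absurd ((le_ciInf hx0).trans ((hle_M ⟨x, hx⟩).trans hMN)) hN.not_ge
  · exact ⟨s, w, hw0, hw1, fun a => (hlt a).le⟩
end
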